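/- arXiv:1406.6565 — 12 statements merged into one kernel-verified Lean document; each statement's English description precedes it below -/
import Mathlib

section
/- Suppose the smooth functions H, u, w, p : ℝ × ℝ → ℝ and the smooth bottom zb : ℝ → ℝ satisfy the non-hydrostatic depth-averaged model (E1)–(E4) and H(x,t) > 0 for all (x,t). Then the energy balance ∂t Ē + ∂x ( u ( Ē + (g/2) H² + H p ) ) = 0 holds identically, where Ē := H (u² + w²)/2 + g H (η + zb)/2. -/
/-- Partial derivative in the space variable `x` of a function of `(x, t)`. -/
noncomputable def pdX (F : ℝ → ℝ → ℝ) (x t : ℝ) : ℝ := deriv (fun y => F y t) x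

/-- Partial derivative in the time variable `t` of a function of `(x, t)`. -/
noncomputable def pdT (F : ℝ → ℝ → ℝ) (x t : ℝ) : ℝ := deriv (fun s => F x s) t

/-- If smooth `H, u, w, p` with `H > 0` and a smooth bottom `zb` satisfy the
non-hydrostatic depth-averaged model (E1)–(E4), then the energy balance
`∂t Ē + ∂x (u (Ē + (g/2) H² + H p)) = 0` holds identically, where
`Ē = H (u² + w²)/2 + g H (η + zb)/2` and `η = H + zb`. -/
theorem energy_balance_nonhydrostatic
    (g : ℝ) (hg : 0 < g)
    (H u w p : ℝ → ℝ → ℝ) (zb : ℝ → ℝ)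
    (hH : ContDiff ℝ (⊤ : ℕ∞) (fun q : ℝ × ℝ => H q.1 q.2))
    (hu : ContDiff ℝ (⊤ : ℕ∞) (fun q : ℝ × ℝ => u q.1 q.2))
    (hw : ContDiff ℝ (⊤ : ℕ∞) (fun q : ℝ × ℝ => w q.1 q.2))
    (hp : ContDiff ℝ (⊤ : ℕ∞) (fun q : ℝ × ℝ => p q.1 q.2))
    (hzb : ContDiff ℝ (⊤ : ℕ∞) zb)
    (hHpos : ∀ x t, 0 < H x t)
    (hE1 : ∀ x t, pdT H x t + pdX (fun x t => H x t * u x t) x t = 0)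
    (hE2 : ∀ x t,
      pdT (fun x t => H x t * u x t) x t
        + pdX (fun x t => H x t * (u x t) ^ 2 + g / 2 * (H x t) ^ 2
            + H x t * p x t) x t
      = -(g * H x t + 2 * p x t) * deriv zb x)
    (hE3 : ∀ x t,
      pdT (fun x t => H x t * w x t) x t
        + pdX (fun x t => H x t * u x t * w x t) x t = 2 * p x t)
    (hE4 : ∀ x t,
      pdT (fun x t => ((H x t + zb x) ^ 2 - (zb x) ^ 2) / 2) x t
        + pdX (fun x t => ((H x t + zb x) ^ 2 - (zb x) ^ 2) / 2 * u x t) x t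
      = H x t * w x t) :
    ∀ x t,
      pdT (fun x t => H x t * ((u x t) ^ 2 + (w x t) ^ 2) / 2
          + g * H x t * ((H x t + zb x) + zb x) / 2) x t
        + pdX (fun x t => u x t *
            ((H x t * ((u x t) ^ 2 + (w x t) ^ 2) / 2
              + g * H x t * ((H x t + zb x) + zb x) / 2)
              + g / 2 * (H x t) ^ 2 + H x t * p x t)) x t
      = 0 := by
  intro x t
  -- basic partial derivatives as HasDerivAt facts
  have hasX : ∀ (F : ℝ → ℝ → ℝ), ContDiff ℝ (⊤ : ℕ∞) (fun q : ℝ × ℝ => F q.1 q.2) →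
      HasDerivAt (fun y => F y t) (pdX F x t) x := by
    intro F hF
    have hdiff : DifferentiableAt ℝ (fun y => F y t) x :=
      ((hF.differentiable (by simp)) (x, t)).comp (g := fun q : ℝ × ℝ => F q.1 q.2) (f := fun y => (y, t)) x
        (differentiableAt_id.prodMk (differentiableAt_const t))
    exact hdiff.hasDerivAt
  have hasT : ∀ (F : ℝ → ℝ → ℝ), ContDiff ℝ (⊤ : ℕ∞) (fun q : ℝ × ℝ => F q.1 q.2) →
      HasDerivAt (fun s => F x s) (pdT F x t) t := by
    intro F hF
    have hdiff : DifferentiableAt ℝ (fun s => F x s) t :=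
      ((hF.differentiable (by simp)) (x, t)).comp (g := fun q : ℝ × ℝ => F q.1 q.2) (f := fun s => (x, s)) t
        ((differentiableAt_const x).prodMk differentiableAt_id)
    exact hdiff.hasDerivAt
  have hHx := hasX H hH
  have hux := hasX u hu
  have hwx := hasX w hw
  have hpx := hasX p hp
  have hHt := hasT H hH
  have hut := hasT u hu
  have hwt := hasT w hw
  have hzx : HasDerivAt zb (deriv zb x) x :=
    ((hzb.differentiable (by simp)) x).hasDerivAt
  set Hv := H x t
  set uv := u x t
  set wv := w x t
  set pv := p x t
  set zv := zb x
  set Hx := pdX H x t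
  set ux := pdX u x t
  set wx := pdX w x t
  set px := pdX p x t
  set Ht := pdT H x t
  set ut := pdT u x t
  set wt := pdT w x t
  set zx := deriv zb x
  -- composite derivatives
  have d1x : deriv (fun y => H y t * u y t) x = Hx * uv + Hv * ux :=
    (hHx.mul hux).deriv
  have d1t : deriv (fun s => H x s * u x s) t = Ht * uv + Hv * ut :=
    (hHt.mul hut).deriv
  have d2x : deriv (fun y => H y t * u y t ^ 2 + g / 2 * H y t ^ 2 + H y t * p y t) x
      = Hx * uv ^ 2 + Hv * (2 * uv * ux) + g / 2 * (2 * Hv * Hx) + (Hx * pv + Hv * px) := by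
    have h := ((hHx.mul (hux.pow 2)).add ((hHx.pow 2).const_mul (g / 2))).add (hHx.mul hpx)
    have := h.deriv
    erw [this]; simp only [Pi.pow_apply, Pi.add_apply, Pi.sub_apply, Pi.mul_apply]; push_cast; ring
  have d3t : deriv (fun s => H x s * w x s) t = Ht * wv + Hv * wt :=
    (hHt.mul hwt).deriv
  have d3x : deriv (fun y => H y t * u y t * w y t) x
      = (Hx * uv + Hv * ux) * wv + Hv * uv * wx :=
    ((hHx.mul hux).mul hwx).deriv
  have d4t : deriv (fun s => ((H x s + zb x) ^ 2 - zb x ^ 2) / 2) t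
      = (Hv + zv) * Ht := by
    have h := (((hHt.add_const zv).pow 2).sub_const (zv ^ 2)).div_const 2
    have := h.deriv
    erw [this]; push_cast; ring
  have d4x : deriv (fun y => ((H y t + zb y) ^ 2 - zb y ^ 2) / 2 * u y t) x
      = ((Hv + zv) * (Hx + zx) - zv * zx) * uv + ((Hv + zv) ^ 2 - zv ^ 2) / 2 * ux := by
    have h := (((((hHx.add hzx).pow 2).sub (hzx.pow 2)).div_const 2).mul hux)
    have := h.deriv
    erw [this]; simp only [Pi.pow_apply, Pi.add_apply, Pi.sub_apply, Pi.mul_apply]; push_cast; ring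
  have dEt : deriv (fun s => H x s * (u x s ^ 2 + w x s ^ 2) / 2
      + g * H x s * (H x s + zb x + zb x) / 2) t
      = (Ht * (uv ^ 2 + wv ^ 2) + Hv * (2 * uv * ut + 2 * wv * wt)) / 2
        + (g * Ht * (Hv + zv + zv) + g * Hv * Ht) / 2 := by
    have h := (((hHt.mul ((hut.pow 2).add (hwt.pow 2))).div_const 2).add
      ((((hHt.const_mul g).mul ((hHt.add_const zv).add_const zv))).div_const 2))
    have := h.deriv
    erw [this]; simp only [Pi.pow_apply, Pi.add_apply, Pi.sub_apply, Pi.mul_apply]; push_cast; ring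
  have dEx : deriv (fun y => u y t *
      (H y t * (u y t ^ 2 + w y t ^ 2) / 2 + g * H y t * (H y t + zb y + zb y) / 2
        + g / 2 * H y t ^ 2 + H y t * p y t)) x
      = ux * (Hv * (uv ^ 2 + wv ^ 2) / 2 + g * Hv * (Hv + zv + zv) / 2
            + g / 2 * Hv ^ 2 + Hv * pv)
        + uv * ((Hx * (uv ^ 2 + wv ^ 2) + Hv * (2 * uv * ux + 2 * wv * wx)) / 2
            + (g * Hx * (Hv + zv + zv) + g * Hv * (Hx + zx + zx)) / 2
            + g / 2 * (2 * Hv * Hx) + (Hx * pv + Hv * px)) := by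
    have h := hux.mul (((((hHx.mul ((hux.pow 2).add (hwx.pow 2))).div_const 2).add
      (((hHx.const_mul g).mul ((hHx.add hzx).add hzx)).div_const 2)).add
      ((hHx.pow 2).const_mul (g / 2))).add (hHx.mul hpx))
    have := h.deriv
    erw [this]; simp only [Pi.pow_apply, Pi.add_apply, Pi.sub_apply, Pi.mul_apply]; push_cast; ring
  -- scalar forms of the equations
  have e1 : Ht + (Hx * uv + Hv * ux) = 0 := by
    have h := hE1 x t; simp only [pdX, pdT] at h; rw [d1x] at h; exact h
  have e2 : (Ht * uv + Hv * ut)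
      + (Hx * uv ^ 2 + Hv * (2 * uv * ux) + g / 2 * (2 * Hv * Hx) + (Hx * pv + Hv * px))
      = -(g * Hv + 2 * pv) * zx := by
    have h := hE2 x t; simp only [pdX, pdT] at h; rw [d1t, d2x] at h; exact h
  have e3 : (Ht * wv + Hv * wt) + ((Hx * uv + Hv * ux) * wv + Hv * uv * wx) = 2 * pv := by
    have h := hE3 x t; simp only [pdX, pdT] at h; rw [d3t, d3x] at h; exact h
  have e4 : (Hv + zv) * Ht
      + (((Hv + zv) * (Hx + zx) - zv * zx) * uv + ((Hv + zv) ^ 2 - zv ^ 2) / 2 * ux)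
      = Hv * wv := by
    have h := hE4 x t; simp only [pdX, pdT] at h; rw [d4t, d4x] at h; exact h
  -- goal in scalar form
  simp only [pdX, pdT]
  rw [dEt, dEx]
  have hHne : Hv ≠ 0 := (hHpos x t).ne'
  refine mul_left_cancel₀ hHne ?_
  rw [mul_zero]
  linear_combination
    (g * Hv ^ 2 - Hv * (uv ^ 2 + wv ^ 2) / 2 + 2 * Hv * pv + g * Hv * zv + 2 * pv * zv) * e1
    + (Hv * uv) * e2 + (Hv * wv) * e3 + (-2 * pv) * e4
end

section
/- If the smooth functions H, u, w : ℝ × ℝ → ℝ and the smooth bottom zb : ℝ → ℝ satisfy the mass equation (E1) ∂t H + ∂x (H u) = 0 and the constraint equation (E4) ∂t ((η² − zb²)/2) + ∂x (((η² − zb²)/2) u) = H w, where η := H + zb, then the shallow-water divergence-free relation H w = −(H²/2) ∂x u + H u ∂x zb holds identically. -/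
lemma diffX_aux (F : ℝ → ℝ → ℝ) (hF : ContDiff ℝ (⊤ : ℕ∞) (fun q : ℝ × ℝ => F q.1 q.2))
    (t x : ℝ) : DifferentiableAt ℝ (fun y => F y t) x :=
  ((hF.differentiable (by simp)).comp (differentiable_id.prodMk (differentiable_const t))).differentiableAt

lemma diffT_aux (F : ℝ → ℝ → ℝ) (hF : ContDiff ℝ (⊤ : ℕ∞) (fun q : ℝ × ℝ => F q.1 q.2))
    (x t : ℝ) : DifferentiableAt ℝ (fun s => F x s) t :=
  ((hF.differentiable (by simp)).comp ((differentiable_const x).prodMk differentiable_id)).differentiableAt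

/-- If smooth `H, u, w` and a smooth bottom `zb` satisfy the mass equation (E1)
and the constraint equation (E4), then the shallow-water divergence-free
relation `H w = −(H²/2) ∂x u + H u ∂x zb` holds identically. -/
theorem shallow_water_divergence_free
    (H u w : ℝ → ℝ → ℝ) (zb : ℝ → ℝ)
    (hH : ContDiff ℝ (⊤ : ℕ∞) (fun q : ℝ × ℝ => H q.1 q.2))
    (hu : ContDiff ℝ (⊤ : ℕ∞) (fun q : ℝ × ℝ => u q.1 q.2))
    (hw : ContDiff ℝ (⊤ : ℕ∞) (fun q : ℝ × ℝ => w q.1 q.2))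
    (hzb : ContDiff ℝ (⊤ : ℕ∞) zb)
    (hE1 : ∀ x t, pdT H x t + pdX (fun x t => H x t * u x t) x t = 0)
    (hE4 : ∀ x t,
      pdT (fun x t => ((H x t + zb x) ^ 2 - (zb x) ^ 2) / 2) x t
        + pdX (fun x t => ((H x t + zb x) ^ 2 - (zb x) ^ 2) / 2 * u x t) x t
      = H x t * w x t) :
    ∀ x t,
      H x t * w x t
        = -((H x t) ^ 2 / 2) * pdX u x t + H x t * u x t * deriv zb x := by
  intro x t
  have hHt : HasDerivAt (fun s => H x s) (pdT H x t) t := (diffT_aux H hH x t).hasDerivAt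
  have hHx : HasDerivAt (fun y => H y t) (pdX H x t) x := (diffX_aux H hH t x).hasDerivAt
  have hux : HasDerivAt (fun y => u y t) (pdX u x t) x := (diffX_aux u hu t x).hasDerivAt
  have hzx : HasDerivAt zb (deriv zb x) x := ((hzb.differentiable (by simp)) x).hasDerivAt
  -- time derivative in E4
  have hT : HasDerivAt (fun s => ((H x s + zb x) ^ 2 - (zb x) ^ 2) / 2)
      ((2 * (H x t + zb x) ^ 1 * pdT H x t) / 2) t := by
    simpa using (((hHt.add_const (zb x)).pow 2).sub_const ((zb x) ^ 2)).div_const 2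
  -- space derivative in E4
  have hSpre : HasDerivAt (fun y => ((H y t + zb y) ^ 2 - (zb y) ^ 2) / 2)
      ((2 * (H x t + zb x) ^ 1 * (pdX H x t + deriv zb x)
        - 2 * (zb x) ^ 1 * deriv zb x) / 2) x := by
    simpa using (((hHx.add hzx).pow 2).sub ((hzx).pow 2)).div_const 2
  have hS := hSpre.fun_mul hux
  -- space derivative in E1
  have hS1 := hHx.fun_mul hux
  have e1 := hE1 x t
  have e4 := hE4 x t
  rw [pdT, pdX, hT.deriv, hS.deriv] at e4
  rw [pdX, hS1.deriv] at e1
  linear_combination (H x t + zb x) * e1 - e4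
end

section
/- Suppose the smooth functions H, u, w, p : ℝ × ℝ → ℝ and the smooth bottom zb : ℝ → ℝ satisfy the non-hydrostatic depth-averaged model (E1)–(E4). Then they also satisfy the rewritten system: ∂t ((H²/2) w) + ∂x ((H²/2) w u) = H p + H w² − H u w ∂x zb, and ∂t (H²/2) + ∂x ((H²/2) u) = H w − H u ∂x zb. -/
lemma pdX_eq {F : ℝ → ℝ → ℝ} {x t v : ℝ} (h : HasDerivAt (fun y => F y t) v x) :
    pdX F x t = v := h.deriv

lemma pdT_eq {F : ℝ → ℝ → ℝ} {x t v : ℝ} (h : HasDerivAt (fun s => F x s) v t) :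
    pdT F x t = v := h.deriv

lemma diffX {F : ℝ → ℝ → ℝ} (hF : ContDiff ℝ (⊤ : ℕ∞) (fun q : ℝ × ℝ => F q.1 q.2)) (x t : ℝ) :
    DifferentiableAt ℝ (fun y => F y t) x :=
  ((hF.differentiable (by simp)).comp (differentiable_id.prodMk (differentiable_const t))) x

lemma diffT {F : ℝ → ℝ → ℝ} (hF : ContDiff ℝ (⊤ : ℕ∞) (fun q : ℝ × ℝ => F q.1 q.2)) (x t : ℝ) :
    DifferentiableAt ℝ (fun s => F x s) t :=
  ((hF.differentiable (by simp)).comp ((differentiable_const x).prodMk differentiable_id)) t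

/-- Smooth solutions of the non-hydrostatic depth-averaged model (E1)–(E4) also
satisfy the rewritten system
`∂t((H²/2) w) + ∂x((H²/2) w u) = H p + H w² − H u w ∂x zb` and
`∂t(H²/2) + ∂x((H²/2) u) = H w − H u ∂x zb`. -/
theorem rewritten_system
    (g : ℝ) (hg : 0 < g)
    (H u w p : ℝ → ℝ → ℝ) (zb : ℝ → ℝ)
    (hH : ContDiff ℝ (⊤ : ℕ∞) (fun q : ℝ × ℝ => H q.1 q.2))
    (hu : ContDiff ℝ (⊤ : ℕ∞) (fun q : ℝ × ℝ => u q.1 q.2))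
    (hw : ContDiff ℝ (⊤ : ℕ∞) (fun q : ℝ × ℝ => w q.1 q.2))
    (hp : ContDiff ℝ (⊤ : ℕ∞) (fun q : ℝ × ℝ => p q.1 q.2))
    (hzb : ContDiff ℝ (⊤ : ℕ∞) zb)
    (hE1 : ∀ x t, pdT H x t + pdX (fun x t => H x t * u x t) x t = 0)
    (hE2 : ∀ x t,
      pdT (fun x t => H x t * u x t) x t
        + pdX (fun x t => H x t * (u x t) ^ 2 + g / 2 * (H x t) ^ 2
            + H x t * p x t) x t
      = -(g * H x t + 2 * p x t) * deriv zb x)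
    (hE3 : ∀ x t,
      pdT (fun x t => H x t * w x t) x t
        + pdX (fun x t => H x t * u x t * w x t) x t = 2 * p x t)
    (hE4 : ∀ x t,
      pdT (fun x t => ((H x t + zb x) ^ 2 - (zb x) ^ 2) / 2) x t
        + pdX (fun x t => ((H x t + zb x) ^ 2 - (zb x) ^ 2) / 2 * u x t) x t
      = H x t * w x t) :
    (∀ x t,
      pdT (fun x t => (H x t) ^ 2 / 2 * w x t) x t
        + pdX (fun x t => (H x t) ^ 2 / 2 * w x t * u x t) x t
      = H x t * p x t + H x t * (w x t) ^ 2
          - H x t * u x t * w x t * deriv zb x) ∧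
    (∀ x t,
      pdT (fun x t => (H x t) ^ 2 / 2) x t
        + pdX (fun x t => (H x t) ^ 2 / 2 * u x t) x t
      = H x t * w x t - H x t * u x t * deriv zb x) := by
  have hz : ∀ x : ℝ, HasDerivAt zb (deriv zb x) x :=
    fun x => ((hzb.differentiable (by simp)) x).hasDerivAt
  have aHx : ∀ x t, HasDerivAt (fun y => H y t) (pdX H x t) x :=
    fun x t => (diffX hH x t).hasDerivAt
  have aHt : ∀ x t, HasDerivAt (fun s => H x s) (pdT H x t) t :=
    fun x t => (diffT hH x t).hasDerivAt
  have aux : ∀ x t, HasDerivAt (fun y => u y t) (pdX u x t) x :=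
    fun x t => (diffX hu x t).hasDerivAt
  have aut : ∀ x t, HasDerivAt (fun s => u x s) (pdT u x t) t :=
    fun x t => (diffT hu x t).hasDerivAt
  have awx : ∀ x t, HasDerivAt (fun y => w y t) (pdX w x t) x :=
    fun x t => (diffX hw x t).hasDerivAt
  have awt : ∀ x t, HasDerivAt (fun s => w x s) (pdT w x t) t :=
    fun x t => (diffT hw x t).hasDerivAt
  -- atomic E1
  have e1 : ∀ x t, pdT H x t + (pdX H x t * u x t + H x t * pdX u x t) = 0 := by
    intro x t
    have h := hE1 x t
    rwa [pdX_eq (F := fun x t => H x t * u x t) ((aHx x t).mul (aux x t))] at h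
  -- atomic second equation
  have atom2 : ∀ x t,
      H x t * pdT H x t
        + (H x t * pdX H x t * u x t + H x t ^ 2 / 2 * pdX u x t)
      = H x t * w x t - H x t * u x t * deriv zb x := by
    intro x t
    have h := hE4 x t
    rw [pdT_eq (F := fun x t => ((H x t + zb x) ^ 2 - (zb x) ^ 2) / 2)
          (((((aHt x t).add_const (zb x)).pow 2).sub_const ((zb x) ^ 2)).div_const 2),
        pdX_eq (F := fun x t => ((H x t + zb x) ^ 2 - (zb x) ^ 2) / 2 * u x t)
          ((((((aHx x t).add (hz x)).pow 2).sub ((hz x).pow 2)).div_const 2).mul (aux x t))]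
      at h
    norm_num at h
    linear_combination h - zb x * e1 x t
  constructor
  · intro x t
    have h3 := hE3 x t
    rw [pdT_eq (F := fun x t => H x t * w x t) ((aHt x t).mul (awt x t)),
        pdX_eq (F := fun x t => H x t * u x t * w x t)
          (((aHx x t).mul (aux x t)).mul (awx x t))] at h3
    rw [pdT_eq (F := fun x t => (H x t) ^ 2 / 2 * w x t)
          ((((aHt x t).pow 2).div_const 2).mul (awt x t)),
        pdX_eq (F := fun x t => (H x t) ^ 2 / 2 * w x t * u x t)
          (((((aHx x t).pow 2).div_const 2).mul (awx x t)).mul (aux x t))]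
    simp only [Pi.mul_apply] at h3
    norm_num
    linear_combination (H x t / 2) * h3 + w x t * atom2 x t - (H x t * w x t / 2) * e1 x t
  · intro x t
    rw [pdT_eq (F := fun x t => (H x t) ^ 2 / 2) (((aHt x t).pow 2).div_const 2),
        pdX_eq (F := fun x t => (H x t) ^ 2 / 2 * u x t)
          ((((aHx x t).pow 2).div_const 2).mul (aux x t))]
    norm_num
    linear_combination atom2 x t
end

section
/- Suppose the smooth functions H, u, w, p : ℝ × ℝ → ℝ and the smooth bottom zb : ℝ → ℝ satisfy the non-hydrostatic depth-averaged model (E1)–(E4), and define the total averaged pressure P := (g/2) H + p. Then they also satisfy: ∂t (H u) + ∂x (H u²) + ∂x (H P) = −2 P ∂x zb, and ∂t (((η² − zb²)/2) w) + ∂x (((η² − zb²)/2) w u) = (H + 2 zb) P + H w² − g (η² − zb²)/2. -/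
lemma pdX_mul (F G : ℝ → ℝ → ℝ) (hF : ContDiff ℝ (⊤ : ℕ∞) (fun q : ℝ × ℝ => F q.1 q.2))
    (hG : ContDiff ℝ (⊤ : ℕ∞) (fun q : ℝ × ℝ => G q.1 q.2)) (x t : ℝ) :
    pdX (fun x t => F x t * G x t) x t = pdX F x t * G x t + F x t * pdX G x t :=
  deriv_mul (diffX hF x t) (diffX hG x t)

lemma pdT_mul (F G : ℝ → ℝ → ℝ) (hF : ContDiff ℝ (⊤ : ℕ∞) (fun q : ℝ × ℝ => F q.1 q.2))
    (hG : ContDiff ℝ (⊤ : ℕ∞) (fun q : ℝ × ℝ => G q.1 q.2)) (x t : ℝ) :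
    pdT (fun x t => F x t * G x t) x t = pdT F x t * G x t + F x t * pdT G x t :=
  deriv_mul (diffT hF x t) (diffT hG x t)

lemma pdX_add (F G : ℝ → ℝ → ℝ) (hF : ContDiff ℝ (⊤ : ℕ∞) (fun q : ℝ × ℝ => F q.1 q.2))
    (hG : ContDiff ℝ (⊤ : ℕ∞) (fun q : ℝ × ℝ => G q.1 q.2)) (x t : ℝ) :
    pdX (fun x t => F x t + G x t) x t = pdX F x t + pdX G x t :=
  deriv_add (diffX hF x t) (diffX hG x t)

/-- Smooth solutions of the non-hydrostatic depth-averaged model (E1)–(E4),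
with total averaged pressure `P := (g/2) H + p`, also satisfy
`∂t(Hu) + ∂x(Hu²) + ∂x(H P) = −2 P ∂x zb` and
`∂t(((η²−zb²)/2) w) + ∂x(((η²−zb²)/2) w u) = (H+2zb) P + H w² − g (η²−zb²)/2`
where `η := H + zb`. -/
theorem rewritten_system_total_pressure
    (g : ℝ) (hg : 0 < g)
    (H u w p : ℝ → ℝ → ℝ) (zb : ℝ → ℝ)
    (hH : ContDiff ℝ (⊤ : ℕ∞) (fun q : ℝ × ℝ => H q.1 q.2))
    (hu : ContDiff ℝ (⊤ : ℕ∞) (fun q : ℝ × ℝ => u q.1 q.2))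
    (hw : ContDiff ℝ (⊤ : ℕ∞) (fun q : ℝ × ℝ => w q.1 q.2))
    (hp : ContDiff ℝ (⊤ : ℕ∞) (fun q : ℝ × ℝ => p q.1 q.2))
    (hzb : ContDiff ℝ (⊤ : ℕ∞) zb)
    (hE1 : ∀ x t, pdT H x t + pdX (fun x t => H x t * u x t) x t = 0)
    (hE2 : ∀ x t,
      pdT (fun x t => H x t * u x t) x t
        + pdX (fun x t => H x t * (u x t) ^ 2 + g / 2 * (H x t) ^ 2
            + H x t * p x t) x t
      = -(g * H x t + 2 * p x t) * deriv zb x)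
    (hE3 : ∀ x t,
      pdT (fun x t => H x t * w x t) x t
        + pdX (fun x t => H x t * u x t * w x t) x t = 2 * p x t)
    (hE4 : ∀ x t,
      pdT (fun x t => ((H x t + zb x) ^ 2 - (zb x) ^ 2) / 2) x t
        + pdX (fun x t => ((H x t + zb x) ^ 2 - (zb x) ^ 2) / 2 * u x t) x t
      = H x t * w x t)
    (P : ℝ → ℝ → ℝ) (hP : ∀ x t, P x t = g / 2 * H x t + p x t) :
    (∀ x t,
      pdT (fun x t => H x t * u x t) x t
        + pdX (fun x t => H x t * (u x t) ^ 2) x t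
        + pdX (fun x t => H x t * P x t) x t
      = -2 * P x t * deriv zb x) ∧
    (∀ x t,
      pdT (fun x t => ((H x t + zb x) ^ 2 - (zb x) ^ 2) / 2 * w x t) x t
        + pdX (fun x t =>
            ((H x t + zb x) ^ 2 - (zb x) ^ 2) / 2 * w x t * u x t) x t
      = (H x t + 2 * zb x) * P x t + H x t * (w x t) ^ 2
          - g * ((H x t + zb x) ^ 2 - (zb x) ^ 2) / 2) := by
  have hzb1 : ContDiff ℝ (⊤ : ℕ∞) (fun q : ℝ × ℝ => zb q.1) := hzb.comp contDiff_fst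
  have hA : ContDiff ℝ (⊤ : ℕ∞) (fun q : ℝ × ℝ => H q.1 q.2 * (u q.1 q.2) ^ 2) :=
    hH.mul (hu.pow 2)
  have hB : ContDiff ℝ (⊤ : ℕ∞) (fun q : ℝ × ℝ => g / 2 * (H q.1 q.2) ^ 2) :=
    contDiff_const.mul (hH.pow 2)
  have hC : ContDiff ℝ (⊤ : ℕ∞) (fun q : ℝ × ℝ => H q.1 q.2 * p q.1 q.2) := hH.mul hp
  have hK : ContDiff ℝ (⊤ : ℕ∞)
      (fun q : ℝ × ℝ => ((H q.1 q.2 + zb q.1) ^ 2 - (zb q.1) ^ 2) / 2) :=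
    (((hH.add hzb1).pow 2).sub (hzb1.pow 2)).div_const 2
  constructor
  · intro x t
    have hfun : (fun x t => H x t * P x t)
        = (fun x t => g / 2 * (H x t) ^ 2 + H x t * p x t) := by
      funext x t; rw [hP]; ring
    rw [hfun]
    have hs0 : pdX (fun x t => g / 2 * (H x t) ^ 2 + H x t * p x t) x t
        = pdX (fun x t => g / 2 * (H x t) ^ 2) x t
          + pdX (fun x t => H x t * p x t) x t := pdX_add _ _ hB hC x t
    have hs1 : pdX (fun x t => H x t * (u x t) ^ 2 + g / 2 * (H x t) ^ 2
          + H x t * p x t) x t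
        = pdX (fun x t => H x t * (u x t) ^ 2 + g / 2 * (H x t) ^ 2) x t
          + pdX (fun x t => H x t * p x t) x t := pdX_add _ _ (hA.add hB) hC x t
    have hs2 : pdX (fun x t => H x t * (u x t) ^ 2 + g / 2 * (H x t) ^ 2) x t
        = pdX (fun x t => H x t * (u x t) ^ 2) x t
          + pdX (fun x t => g / 2 * (H x t) ^ 2) x t := pdX_add _ _ hA hB x t
    have h2 := hE2 x t
    rw [hs1, hs2] at h2
    rw [hs0]
    linear_combination h2 + 2 * deriv zb x * hP x t
  · intro x t
    -- expansions
    have e1 : pdT (fun x t => ((H x t + zb x) ^ 2 - (zb x) ^ 2) / 2 * w x t) x t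
        = pdT (fun x t => ((H x t + zb x) ^ 2 - (zb x) ^ 2) / 2) x t * w x t
          + ((H x t + zb x) ^ 2 - (zb x) ^ 2) / 2 * pdT w x t :=
      pdT_mul _ _ hK hw x t
    have e2 : pdX (fun x t =>
          ((H x t + zb x) ^ 2 - (zb x) ^ 2) / 2 * w x t * u x t) x t
        = pdX (fun x t => ((H x t + zb x) ^ 2 - (zb x) ^ 2) / 2 * w x t) x t
            * u x t
          + ((H x t + zb x) ^ 2 - (zb x) ^ 2) / 2 * w x t * pdX u x t :=
      pdX_mul _ _ (hK.mul hw) hu x t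
    have e2' : pdX (fun x t => ((H x t + zb x) ^ 2 - (zb x) ^ 2) / 2 * w x t) x t
        = pdX (fun x t => ((H x t + zb x) ^ 2 - (zb x) ^ 2) / 2) x t * w x t
          + ((H x t + zb x) ^ 2 - (zb x) ^ 2) / 2 * pdX w x t :=
      pdX_mul _ _ hK hw x t
    have e4 := hE4 x t
    rw [pdX_mul _ _ hK hu x t] at e4
    have f1 := hE1 x t
    rw [pdX_mul _ _ hH hu x t] at f1
    have f3 := hE3 x t
    rw [pdT_mul _ _ hH hw x t, pdX_mul _ _ (hH.mul hu) hw x t,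
      pdX_mul _ _ hH hu x t] at f3
    have hHA : H x t * pdT w x t + H x t * u x t * pdX w x t = 2 * p x t := by
      linear_combination f3 - w x t * f1
    rw [e1, e2, e2']
    linear_combination w x t * e4 + ((H x t + 2 * zb x) / 2) * hHA
      - (H x t + 2 * zb x) * hP x t
end

section
/- Let H, u, w, p, p_b : ℝ × ℝ → ℝ be smooth with H > 0 everywhere, and let zb : ℝ → ℝ be a smooth bottom. Suppose they satisfy the depth-averaged system with generic bottom pressure p_b: (E1) ∂t H + ∂x (H u) = 0; (E2') ∂t (H u) + ∂x (H u² + (g/2) H² + H p) = −(g H + p_b) ∂x zb; (E3') ∂t (H w) + ∂x (H u w) = p_b; (E4) ∂t ((η² − zb²)/2) + ∂x (((η² − zb²)/2) u) = H w, where η := H + zb. Then the energy residual identity ∂t Ē + ∂x ( u ( Ē + (g/2) H² + H p ) ) = (p_b − 2 p) (w − u ∂x zb) = −(p_b − 2 p) (H/2) ∂x u holds identically, where Ē := H (u² + w²)/2 + g H (η + zb)/2. In particular the energy balance ∂t Ē + ∂x ( u ( Ē + (g/2) H² + H p ) ) = 0 holds at every point where p_b = 2 p, and at every point where ∂x u ≠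 0 the energy balance forces the closure relation p_b = 2 p. -/
/-- For the depth-averaged system with generic bottom pressure `p_b`, the
energy residual equals `(p_b − 2p)(w − u ∂x zb) = −(p_b − 2p)(H/2) ∂x u`;
the energy balance holds wherever `p_b = 2p`, and wherever `∂x u ≠ 0` the
energy balance forces the closure `p_b = 2p`. -/
theorem energy_residual_generic_bottom_pressure
    (g : ℝ) (hg : 0 < g)
    (H u w p pb : ℝ → ℝ → ℝ) (zb : ℝ → ℝ)
    (hH : ContDiff ℝ (⊤ : ℕ∞) (fun q : ℝ × ℝ => H q.1 q.2))
    (hu : ContDiff ℝ (⊤ : ℕ∞) (fun q : ℝ × ℝ => u q.1 q.2))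
    (hw : ContDiff ℝ (⊤ : ℕ∞) (fun q : ℝ × ℝ => w q.1 q.2))
    (hp : ContDiff ℝ (⊤ : ℕ∞) (fun q : ℝ × ℝ => p q.1 q.2))
    (hpb : ContDiff ℝ (⊤ : ℕ∞) (fun q : ℝ × ℝ => pb q.1 q.2))
    (hzb : ContDiff ℝ (⊤ : ℕ∞) zb)
    (hHpos : ∀ x t, 0 < H x t)
    (hE1 : ∀ x t, pdT H x t + pdX (fun x t => H x t * u x t) x t = 0)
    (hE2 : ∀ x t,
      pdT (fun x t => H x t * u x t) x t
        + pdX (fun x t => H x t * (u x t) ^ 2 + g / 2 * (H x t) ^ 2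
            + H x t * p x t) x t
      = -(g * H x t + pb x t) * deriv zb x)
    (hE3 : ∀ x t,
      pdT (fun x t => H x t * w x t) x t
        + pdX (fun x t => H x t * u x t * w x t) x t = pb x t)
    (hE4 : ∀ x t,
      pdT (fun x t => ((H x t + zb x) ^ 2 - (zb x) ^ 2) / 2) x t
        + pdX (fun x t => ((H x t + zb x) ^ 2 - (zb x) ^ 2) / 2 * u x t) x t
      = H x t * w x t) :
    ∀ x t,
      (pdT (fun x t => H x t * ((u x t) ^ 2 + (w x t) ^ 2) / 2
            + g * H x t * ((H x t + zb x) + zb x) / 2) x t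
          + pdX (fun x t => u x t *
              ((H x t * ((u x t) ^ 2 + (w x t) ^ 2) / 2
                + g * H x t * ((H x t + zb x) + zb x) / 2)
                + g / 2 * (H x t) ^ 2 + H x t * p x t)) x t
        = (pb x t - 2 * p x t) * (w x t - u x t * deriv zb x)) ∧
      ((pb x t - 2 * p x t) * (w x t - u x t * deriv zb x)
        = -(pb x t - 2 * p x t) * (H x t / 2) * pdX u x t) ∧
      (pb x t = 2 * p x t →
        pdT (fun x t => H x t * ((u x t) ^ 2 + (w x t) ^ 2) / 2
            + g * H x t * ((H x t + zb x) + zb x) / 2) x t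
          + pdX (fun x t => u x t *
              ((H x t * ((u x t) ^ 2 + (w x t) ^ 2) / 2
                + g * H x t * ((H x t + zb x) + zb x) / 2)
                + g / 2 * (H x t) ^ 2 + H x t * p x t)) x t = 0) ∧
      (pdX u x t ≠ 0 →
        pdT (fun x t => H x t * ((u x t) ^ 2 + (w x t) ^ 2) / 2
            + g * H x t * ((H x t + zb x) + zb x) / 2) x t
          + pdX (fun x t => u x t *
              ((H x t * ((u x t) ^ 2 + (w x t) ^ 2) / 2
                + g * H x t * ((H x t + zb x) + zb x) / 2)
                + g / 2 * (H x t) ^ 2 + H x t * p x t)) x t = 0 →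
        pb x t = 2 * p x t) := by
  intro x t
  -- slice derivatives
  have hsl : ∀ (F : ℝ → ℝ → ℝ), ContDiff ℝ (⊤ : ℕ∞) (fun q : ℝ × ℝ => F q.1 q.2) →
      HasDerivAt (fun y => F y t) (pdX F x t) x ∧ HasDerivAt (fun s => F x s) (pdT F x t) t := by
    intro F hF
    have hd := hF.differentiable (by simp)
    constructor
    · exact (((hd (x, t)).comp x (differentiableAt_id.prodMk (differentiableAt_const t)))).hasDerivAt
    · exact (((hd (x, t)).comp t ((differentiableAt_const x).prodMk differentiableAt_id))).hasDerivAt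
  obtain ⟨hH1, hH2⟩ := hsl H hH
  obtain ⟨hu1, hu2⟩ := hsl u hu
  obtain ⟨hw1, hw2⟩ := hsl w hw
  obtain ⟨hp1, hp2⟩ := hsl p hp
  have hz : HasDerivAt zb (deriv zb x) x := (hzb.differentiable (by simp) x).hasDerivAt
  have e1 := hE1 x t
  have e2 := hE2 x t
  have e3 := hE3 x t
  have e4 := hE4 x t
  simp only [pdX, pdT] at e1 e2 e3 e4 hH1 hH2 hu1 hu2 hw1 hw2 hp1 hp2 ⊢
  rw [(hH1.fun_mul hu1).deriv] at e1
  rw [(hH2.fun_mul hu2).deriv,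
    (((hH1.fun_mul (hu1.fun_pow 2)).fun_add ((hH1.fun_pow 2).const_mul (g / 2))).fun_add (hH1.fun_mul hp1)).deriv] at e2
  rw [(hH2.fun_mul hw2).deriv, ((hH1.fun_mul hu1).fun_mul hw1).deriv] at e3
  rw [((((hH2.add_const (zb x)).fun_pow 2).sub_const ((zb x) ^ 2)).div_const 2).deriv,
    (((((hH1.fun_add hz).fun_pow 2).fun_sub (hz.fun_pow 2)).div_const 2).fun_mul hu1).deriv] at e4
  rw [(((hH2.fun_mul ((hu2.fun_pow 2).fun_add (hw2.fun_pow 2))).div_const 2).fun_add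
      (((hH2.const_mul g).fun_mul ((hH2.add_const (zb x)).add_const (zb x))).div_const 2)).deriv,
    (hu1.fun_mul ((((hH1.fun_mul ((hu1.fun_pow 2).fun_add (hw1.fun_pow 2))).div_const 2).fun_add
      (((hH1.const_mul g).fun_mul ((hH1.fun_add hz).fun_add hz)).div_const 2)).fun_add
      ((hH1.fun_pow 2).const_mul (g / 2)) |>.fun_add (hH1.fun_mul hp1))).deriv]
  push_cast at e1 e2 e3 e4 ⊢
  have hHne : H x t ≠ 0 := (hHpos x t).ne'
  have key : w x t - u x t * deriv zb x + H x t / 2 * deriv (fun y => u y t) x = 0 := by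
    have h0 : H x t * (w x t - u x t * deriv zb x + H x t / 2 * deriv (fun y => u y t) x) = 0 := by
      linear_combination (H x t + zb x) * e1 - e4
    rcases mul_eq_zero.mp h0 with h | h
    · exact absurd h hHne
    · exact h
  refine ⟨?_, ?_, ?_, ?_⟩
  · linear_combination u x t * e2 + w x t * e3
      - ((u x t) ^ 2 + (w x t) ^ 2) / 2 * e1 + g * e4
      + (g * H x t + 2 * p x t) * key
  · linear_combination (pb x t - 2 * p x t) * key
  · intro hcl
    linear_combination (w x t - u x t * deriv zb x) * hcl + u x t * e2 + w x t * e3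
      - ((u x t) ^ 2 + (w x t) ^ 2) / 2 * e1 + g * e4
      + (g * H x t + 2 * p x t) * key
  · intro hne h0
    have r1 : (pb x t - 2 * p x t) * (w x t - u x t * deriv zb x)
        = -(pb x t - 2 * p x t) * (H x t / 2) * deriv (fun y => u y t) x := by
      linear_combination (pb x t - 2 * p x t) * key
    have r0 : -(pb x t - 2 * p x t) * (H x t / 2) * deriv (fun y => u y t) x = 0 := by
      rw [← r1]
      linear_combination h0 - (u x t * e2 + w x t * e3
        - ((u x t) ^ 2 + (w x t) ^ 2) / 2 * e1 + g * e4
        + (g * H x t + 2 * p x t) * key)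
    have := mul_eq_zero.mp r0
    rcases this with h | h
    · rcases mul_eq_zero.mp h with h' | h'
      · linarith [neg_eq_zero.mp h']
      · exact absurd (by linarith : H x t = 0) hHne
    · exact absurd h hne
end

section
/- Let μ ≥ 0 and κ ≥ 0 be constants (viscosity and friction coefficients). Suppose the smooth functions H, u, w, p : ℝ × ℝ → ℝ with H > 0 everywhere and the smooth bottom zb : ℝ → ℝ satisfy the depth-averaged Navier–Stokes system: (N1) ∂t H + ∂x (H u) = 0; (N2) ∂t (H u) + ∂x (H u² + (g/2) H² + H p) = −(g H + 2 p) ∂x zb + ∂x (2 μ H ∂x u) − κ u; (N3) ∂t (H w) + ∂x (H u w) = 2 p + ∂x (μ H ∂x w); (N4) ∂t ((η² − zb²)/2) + ∂x (((η² − zb²)/2) u) = H w, where η := H + zb. Then, with Ē := H (u² + w²)/2 + g H (η + zb)/2, the energy balance ∂t Ē + ∂x ( u ( Ē + (g/2) H² + H p − 2 μ H ∂x u ) − μ H w ∂x w ) = −μ H ( 2 (∂x u)² + (∂x w)² ) − κ u² holds identically. -/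
lemma sliceX {F : ℝ → ℝ → ℝ} (hF : ContDiff ℝ (⊤ : ℕ∞) (fun q : ℝ × ℝ => F q.1 q.2)) (x t : ℝ) :
    HasDerivAt (fun y => F y t) (pdX F x t) x := by
  have hd : DifferentiableAt ℝ (fun y : ℝ => F y t) x := by
    have h1 : DifferentiableAt ℝ (fun q : ℝ × ℝ => F q.1 q.2) (x, t) :=
      (hF.differentiable (by simp)) (x, t)
    exact h1.comp x (differentiableAt_id.prodMk (differentiableAt_const t) :
      DifferentiableAt ℝ (fun y : ℝ => (y, t)) x)
  exact hd.hasDerivAt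

lemma sliceT {F : ℝ → ℝ → ℝ} (hF : ContDiff ℝ (⊤ : ℕ∞) (fun q : ℝ × ℝ => F q.1 q.2)) (x t : ℝ) :
    HasDerivAt (fun s => F x s) (pdT F x t) t := by
  have hd : DifferentiableAt ℝ (fun s : ℝ => F x s) t := by
    have h1 : DifferentiableAt ℝ (fun q : ℝ × ℝ => F q.1 q.2) (x, t) :=
      (hF.differentiable (by simp)) (x, t)
    exact h1.comp t ((differentiableAt_const x).prodMk differentiableAt_id)
  exact hd.hasDerivAt

lemma contDiff_pdX {F : ℝ → ℝ → ℝ} (hF : ContDiff ℝ (⊤ : ℕ∞) (fun q : ℝ × ℝ => F q.1 q.2)) :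
    ContDiff ℝ (⊤ : ℕ∞) (fun q : ℝ × ℝ => pdX F q.1 q.2) := by
  have key : ∀ q : ℝ × ℝ, pdX F q.1 q.2
      = fderiv ℝ (fun q : ℝ × ℝ => F q.1 q.2) q ((1 : ℝ), (0 : ℝ)) := by
    intro q
    have hline : HasDerivAt (fun y : ℝ => (y, q.2)) ((1 : ℝ), (0 : ℝ)) q.1 :=
      (hasDerivAt_id q.1).prodMk (hasDerivAt_const q.1 q.2)
    have hf : HasFDerivAt (fun q : ℝ × ℝ => F q.1 q.2)
        (fderiv ℝ (fun q : ℝ × ℝ => F q.1 q.2) q) (q.1, q.2) :=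
      ((hF.differentiable (by simp)) q).hasFDerivAt
    have h2 := hf.comp_hasDerivAt q.1 hline
    exact h2.deriv
  have heq : (fun q : ℝ × ℝ => pdX F q.1 q.2)
      = fun q : ℝ × ℝ => fderiv ℝ (fun q : ℝ × ℝ => F q.1 q.2) q ((1 : ℝ), (0 : ℝ)) :=
    funext key
  rw [heq]
  exact (hF.fderiv_right (by simp)).clm_apply contDiff_const

/-- Energy balance for the depth-averaged Navier–Stokes system with viscosity
`μ ≥ 0` and friction `κ ≥ 0`:
`∂t Ē + ∂x (u (Ē + (g/2)H² + Hp − 2μH ∂x u) − μHw ∂x w)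
  = −μH (2(∂x u)² + (∂x w)²) − κ u²`. -/
theorem energy_balance_navier_stokes
    (g μ κ : ℝ) (hg : 0 < g) (hμ : 0 ≤ μ) (hκ : 0 ≤ κ)
    (H u w p : ℝ → ℝ → ℝ) (zb : ℝ → ℝ)
    (hH : ContDiff ℝ (⊤ : ℕ∞) (fun q : ℝ × ℝ => H q.1 q.2))
    (hu : ContDiff ℝ (⊤ : ℕ∞) (fun q : ℝ × ℝ => u q.1 q.2))
    (hw : ContDiff ℝ (⊤ : ℕ∞) (fun q : ℝ × ℝ => w q.1 q.2))
    (hp : ContDiff ℝ (⊤ : ℕ∞) (fun q : ℝ × ℝ => p q.1 q.2))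
    (hzb : ContDiff ℝ (⊤ : ℕ∞) zb)
    (hHpos : ∀ x t, 0 < H x t)
    (hN1 : ∀ x t, pdT H x t + pdX (fun x t => H x t * u x t) x t = 0)
    (hN2 : ∀ x t,
      pdT (fun x t => H x t * u x t) x t
        + pdX (fun x t => H x t * (u x t) ^ 2 + g / 2 * (H x t) ^ 2
            + H x t * p x t) x t
      = -(g * H x t + 2 * p x t) * deriv zb x
          + pdX (fun x t => 2 * μ * H x t * pdX u x t) x t - κ * u x t)
    (hN3 : ∀ x t,
      pdT (fun x t => H x t * w x t) x t
        + pdX (fun x t => H x t * u x t * w x t) x t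
      = 2 * p x t + pdX (fun x t => μ * H x t * pdX w x t) x t)
    (hN4 : ∀ x t,
      pdT (fun x t => ((H x t + zb x) ^ 2 - (zb x) ^ 2) / 2) x t
        + pdX (fun x t => ((H x t + zb x) ^ 2 - (zb x) ^ 2) / 2 * u x t) x t
      = H x t * w x t) :
    ∀ x t,
      pdT (fun x t => H x t * ((u x t) ^ 2 + (w x t) ^ 2) / 2
          + g * H x t * ((H x t + zb x) + zb x) / 2) x t
        + pdX (fun x t =>
            u x t * ((H x t * ((u x t) ^ 2 + (w x t) ^ 2) / 2
                + g * H x t * ((H x t + zb x) + zb x) / 2)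
              + g / 2 * (H x t) ^ 2 + H x t * p x t
              - 2 * μ * H x t * pdX u x t)
            - μ * H x t * w x t * pdX w x t) x t
      = -(μ * H x t * (2 * (pdX u x t) ^ 2 + (pdX w x t) ^ 2))
          - κ * (u x t) ^ 2 := by
  intro x t
  have h1 := hN1 x t
  have h2 := hN2 x t
  have h3 := hN3 x t
  have h4 := hN4 x t
  have pXH := sliceX hH x t
  have pXu := sliceX hu x t
  have pXw := sliceX hw x t
  have pXp := sliceX hp x t
  have pTH := sliceT hH x t
  have pTu := sliceT hu x t
  have pTw := sliceT hw x t
  have pXux := sliceX (contDiff_pdX hu) x t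
  have pXwx := sliceX (contDiff_pdX hw) x t
  have hzb' : HasDerivAt zb (deriv zb x) x := (hzb.differentiable (by simp) x).hasDerivAt
  -- expansions
  have a1 : pdX (fun x t => H x t * u x t) x t = _ := (pXH.mul pXu).deriv
  have a2 : pdT (fun x t => H x t * u x t) x t = _ := (pTH.mul pTu).deriv
  have a3 : pdX (fun x t => H x t * (u x t) ^ 2 + g / 2 * (H x t) ^ 2
      + H x t * p x t) x t = _ :=
    (((pXH.mul (pXu.pow 2)).add ((pXH.pow 2).const_mul (g / 2))).add (pXH.mul pXp)).deriv
  have a4 : pdX (fun x t => 2 * μ * H x t * pdX u x t) x t = _ :=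
    ((pXH.const_mul (2 * μ)).mul pXux).deriv
  have a5 : pdT (fun x t => H x t * w x t) x t = _ := (pTH.mul pTw).deriv
  have a6 : pdX (fun x t => H x t * u x t * w x t) x t = _ := ((pXH.mul pXu).mul pXw).deriv
  have a7 : pdX (fun x t => μ * H x t * pdX w x t) x t = _ :=
    ((pXH.const_mul μ).mul pXwx).deriv
  have a8 : pdT (fun x t => ((H x t + zb x) ^ 2 - (zb x) ^ 2) / 2) x t = _ :=
    ((((pTH.add_const (zb x)).pow 2).sub_const ((zb x) ^ 2)).div_const 2).deriv
  have a9 : pdX (fun x t => ((H x t + zb x) ^ 2 - (zb x) ^ 2) / 2 * u x t) x t = _ :=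
    (((((pXH.add hzb').pow 2).sub (hzb'.pow 2)).div_const 2).mul pXu).deriv
  have e5 : pdT (fun x t => H x t * ((u x t) ^ 2 + (w x t) ^ 2) / 2
      + g * H x t * ((H x t + zb x) + zb x) / 2) x t = _ :=
    (((pTH.mul ((pTu.pow 2).add (pTw.pow 2))).div_const 2).add
      (((pTH.const_mul g).mul ((pTH.add_const (zb x)).add_const (zb x))).div_const 2)).deriv
  have innerE := (((((pXH.mul ((pXu.pow 2).add (pXw.pow 2))).div_const 2).add
      (((pXH.const_mul g).mul ((pXH.add hzb').add hzb')).div_const 2)).add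
      ((pXH.pow 2).const_mul (g / 2))).add (pXH.mul pXp)).sub
      ((pXH.const_mul (2 * μ)).mul pXux)
  have e6 : pdX (fun x t =>
      u x t * ((H x t * ((u x t) ^ 2 + (w x t) ^ 2) / 2
          + g * H x t * ((H x t + zb x) + zb x) / 2)
        + g / 2 * (H x t) ^ 2 + H x t * p x t
        - 2 * μ * H x t * pdX u x t)
      - μ * H x t * w x t * pdX w x t) x t = _ :=
    ((pXu.mul innerE).sub (((pXH.const_mul μ).mul pXw).mul pXwx)).deriv
  rw [a1] at h1
  rw [a2, a3, a4] at h2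
  rw [a5, a6, a7] at h3
  rw [a8, a9] at h4
  rw [e5, e6]
  simp only [Pi.add_apply, Pi.mul_apply, Pi.pow_apply, Pi.sub_apply, Pi.div_apply] at h1 h2 h3 h4 ⊢
  have h5 : w x t - u x t * deriv zb x + H x t / 2 * pdX u x t = 0 := by
    have hm : H x t * (w x t - u x t * deriv zb x + H x t / 2 * pdX u x t) = H x t * 0 := by
      rw [mul_zero]
      linear_combination (H x t + zb x) * h1 - h4
    exact mul_left_cancel₀ (hHpos x t).ne' hm
  linear_combination u x t * h2 + w x t * h3 + g * h4
    - ((u x t) ^ 2 + (w x t) ^ 2) / 2 * h1 + (2 * p x t + g * H x t) * h5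
end

section
/- Let H, u : ℝ × ℝ → ℝ be smooth functions of space x and time t satisfying the mass conservation ∂t H + ∂x (H u) = 0. Define the material derivative Ḣ := ∂t H + u ∂x H, the Green–Naghdi pressure p := (1/3) H ( ∂t Ḣ + u ∂x Ḣ ), and the vertical velocity w := −(H/2) ∂x u. Then ∂t (H w) + ∂x (H u w) = (3/2) p holds identically; equivalently, p = (2/3) ( ∂t (H w) + ∂x (H u w) ). -/
lemma slice_hasDerivAt_x (F : ℝ → ℝ → ℝ)
    (hF : ContDiff ℝ (⊤ : ℕ∞) (fun q : ℝ × ℝ => F q.1 q.2)) (x t : ℝ) :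
    HasDerivAt (fun y => F y t) (pdX F x t) x := by
  have h : HasDerivAt (fun y => F y t)
      (fderiv ℝ (fun q : ℝ × ℝ => F q.1 q.2) (x, t) (1, 0)) x := by
    have hin : HasDerivAt (fun y : ℝ => ((y, t) : ℝ × ℝ)) ((1 : ℝ), (0 : ℝ)) x :=
      (hasDerivAt_id x).prodMk (hasDerivAt_const x t)
    exact ((hF.differentiable (by simp) (x, t)).hasFDerivAt).comp_hasDerivAt x hin
  have := h.deriv
  rw [pdX, this]
  exact h

lemma slice_hasDerivAt_t (F : ℝ → ℝ → ℝ)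
    (hF : ContDiff ℝ (⊤ : ℕ∞) (fun q : ℝ × ℝ => F q.1 q.2)) (x t : ℝ) :
    HasDerivAt (fun s => F x s) (pdT F x t) t := by
  have h : HasDerivAt (fun s => F x s)
      (fderiv ℝ (fun q : ℝ × ℝ => F q.1 q.2) (x, t) (0, 1)) t := by
    have hin : HasDerivAt (fun s : ℝ => ((x, s) : ℝ × ℝ)) ((0 : ℝ), (1 : ℝ)) t :=
      (hasDerivAt_const t x).prodMk (hasDerivAt_id t)
    exact ((hF.differentiable (by simp) (x, t)).hasFDerivAt).comp_hasDerivAt t hin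
  have := h.deriv
  rw [pdT, this]
  exact h

/-- `(x,t) ↦ pdX u x t` is smooth when `u` is. -/
lemma pdX_contDiff (F : ℝ → ℝ → ℝ)
    (hF : ContDiff ℝ (⊤ : ℕ∞) (fun q : ℝ × ℝ => F q.1 q.2)) :
    ContDiff ℝ (⊤ : ℕ∞) (fun q : ℝ × ℝ => pdX F q.1 q.2) := by
  have h1 : ContDiff ℝ (⊤ : ℕ∞) (fun q : ℝ × ℝ =>
      fderiv ℝ (fun q : ℝ × ℝ => F q.1 q.2) q (1, 0)) := by
    exact (hF.fderiv_right (by simp)).clm_apply contDiff_const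
  have h2 : (fun q : ℝ × ℝ => pdX F q.1 q.2) = fun q : ℝ × ℝ =>
      fderiv ℝ (fun q : ℝ × ℝ => F q.1 q.2) q (1, 0) := by
    funext q
    have hin : HasDerivAt (fun y : ℝ => ((y, q.2) : ℝ × ℝ)) ((1 : ℝ), (0 : ℝ)) q.1 :=
      (hasDerivAt_id q.1).prodMk (hasDerivAt_const q.1 q.2)
    have h : HasDerivAt (fun y => F y q.2)
        (fderiv ℝ (fun q : ℝ × ℝ => F q.1 q.2) q (1, 0)) q.1 :=
      by have hd := hF.differentiable (by simp) q; exact (hd.hasFDerivAt).comp_hasDerivAt q.1 hin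
    exact h.deriv
  rw [h2]; exact h1

/-- Under mass conservation `∂t H + ∂x (Hu) = 0`, the Green–Naghdi pressure
`p := (1/3) H (∂t Ḣ + u ∂x Ḣ)` with `Ḣ := ∂t H + u ∂x H` and the vertical
velocity `w := −(H/2) ∂x u` satisfy `∂t (Hw) + ∂x (Huw) = (3/2) p`,
equivalently `p = (2/3) (∂t (Hw) + ∂x (Huw))`. -/
theorem green_naghdi_pressure_identity
    (H u : ℝ → ℝ → ℝ)
    (hH : ContDiff ℝ (⊤ : ℕ∞) (fun q : ℝ × ℝ => H q.1 q.2))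
    (hu : ContDiff ℝ (⊤ : ℕ∞) (fun q : ℝ × ℝ => u q.1 q.2))
    (hmass : ∀ x t, pdT H x t + pdX (fun x t => H x t * u x t) x t = 0)
    (Hdot p w : ℝ → ℝ → ℝ)
    (hHdot : ∀ x t, Hdot x t = pdT H x t + u x t * pdX H x t)
    (hpdef : ∀ x t, p x t = 1 / 3 * H x t * (pdT Hdot x t + u x t * pdX Hdot x t))
    (hwdef : ∀ x t, w x t = -(H x t / 2) * pdX u x t) :
    (∀ x t,
      pdT (fun x t => H x t * w x t) x t
        + pdX (fun x t => H x t * u x t * w x t) x t = 3 / 2 * p x t) ∧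
    (∀ x t,
      p x t = 2 / 3 * (pdT (fun x t => H x t * w x t) x t
        + pdX (fun x t => H x t * u x t * w x t) x t)) := by
  have Hx : ∀ x t, HasDerivAt (fun y => H y t) (pdX H x t) x := slice_hasDerivAt_x H hH
  have Ht : ∀ x t, HasDerivAt (fun s => H x s) (pdT H x t) t := slice_hasDerivAt_t H hH
  have ux : ∀ x t, HasDerivAt (fun y => u y t) (pdX u x t) x := slice_hasDerivAt_x u hu
  have hHu : ∀ x t, pdX (fun x t => H x t * u x t) x t
      = pdX H x t * u x t + H x t * pdX u x t := by
    intro x t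
    exact ((Hx x t).mul (ux x t)).deriv
  have hHw : ∀ x t, Hdot x t = -(H x t * pdX u x t) := by
    intro x t
    have hm := hmass x t
    rw [hHu x t] at hm
    rw [hHdot]
    linear_combination hm
  have hw2 : ∀ x t, w x t = Hdot x t / 2 := by
    intro x t; rw [hwdef, hHw]; ring
  have hG : ContDiff ℝ (⊤ : ℕ∞) (fun q : ℝ × ℝ => -(H q.1 q.2 * pdX u q.1 q.2)) :=
    (hH.mul (pdX_contDiff u hu)).neg
  have Hdott : ∀ x t, HasDerivAt (fun s => Hdot x s) (pdT Hdot x t) t := by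
    intro x t
    have e : (fun s => Hdot x s) = (fun s => -(H x s * pdX u x s)) :=
      funext fun s => hHw x s
    have h := slice_hasDerivAt_t (fun x t => -(H x t * pdX u x t)) hG x t
    rw [pdT, e]
    exact h.differentiableAt.hasDerivAt
  have Hdotx : ∀ x t, HasDerivAt (fun y => Hdot y t) (pdX Hdot x t) x := by
    intro x t
    have e : (fun y => Hdot y t) = (fun y => -(H y t * pdX u y t)) :=
      funext fun y => hHw y t
    have h := slice_hasDerivAt_x (fun x t => -(H x t * pdX u x t)) hG x t
    rw [pdX, e]
    exact h.differentiableAt.hasDerivAt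
  have key : ∀ x t,
      pdT (fun x t => H x t * w x t) x t
        + pdX (fun x t => H x t * u x t * w x t) x t = 3 / 2 * p x t := by
    intro x t
    have hA : pdT (fun x t => H x t * w x t) x t
        = pdT H x t * (Hdot x t / 2) + H x t * (pdT Hdot x t / 2) := by
      have e : (fun s => H x s * w x s) = (fun s => H x s * (Hdot x s / 2)) :=
        funext fun s => by rw [hw2]
      have h := (Ht x t).mul ((Hdott x t).div_const 2)
      show deriv (fun s => H x s * w x s) t = _
      rw [e]
      exact h.deriv
    have hB : pdX (fun x t => H x t * u x t * w x t) x t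
        = (pdX H x t * u x t + H x t * pdX u x t) * (Hdot x t / 2)
          + H x t * u x t * (pdX Hdot x t / 2) := by
      have e : (fun y => H y t * u y t * w y t)
          = (fun y => H y t * u y t * (Hdot y t / 2)) :=
        funext fun y => by rw [hw2]
      have h := ((Hx x t).mul (ux x t)).mul ((Hdotx x t).div_const 2)
      show deriv (fun y => H y t * u y t * w y t) x = _
      rw [e]
      exact h.deriv
    have hm := hmass x t
    rw [hHu x t] at hm
    rw [hA, hB, hpdef]
    linear_combination (Hdot x t / 2) * hm
  exact ⟨key, fun x t => by have := key x t; linarith⟩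
end

section
/- Let g > 0, H0 > 0, b1, b2 ∈ ℝ, and let f : ℝ → ℝ be a smooth function with h(t) := ∫_{t̃0}^{t} f(t1) dt1 for some t̃0 ∈ ℝ, satisfying the ODE f'(t) + b2 (g + b2 f(t)²) h(t) = 0 for all t. Define H(x,t) := H0 − (b2/2)(x − h(t))², u(x,z,t) := f(t), w(x,z,t) := b2 x f(t), zb(x) := b1 + (b2/2) x², η(x,t) := H(x,t) + zb(x), p(x,z,t) := (g + b2 f(t)²)(η(x,t) − z), and the forcing s(x,z,t) := b2 x f'(t). Then at every point (x,t) with H(x,t) > 0 and every z with zb(x) ≤ z ≤ η(x,t), the following hold: (i) ∂x u + ∂z w = 0; (ii) ∂t u + u ∂x u + w ∂z u + ∂x p = 0; (iii) ∂t w + u ∂x w + w ∂z w + ∂z p = −g + s; (iv) p(x, η(x,t), t) = 0; (v) ∂t η + u ∂x η − w = 0 at z = η(x,t); (vi) u ∂x zb − w = 0 at z = zb(x). -/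
/-- Partial derivative in `x` of a function of `(x, z, t)`. -/
noncomputable def pd3X (F : ℝ → ℝ → ℝ → ℝ) (x z t : ℝ) : ℝ :=
  deriv (fun y => F y z t) x

/-- Partial derivative in `z` of a function of `(x, z, t)`. -/
noncomputable def pd3Z (F : ℝ → ℝ → ℝ → ℝ) (x z t : ℝ) : ℝ :=
  deriv (fun ζ => F x ζ t) z

/-- Partial derivative in `t` of a function of `(x, z, t)`. -/
noncomputable def pd3T (F : ℝ → ℝ → ℝ → ℝ) (x z t : ℝ) : ℝ :=
  deriv (fun s => F x z s) t

/-- The Thacker-type fields built from a solution `f` of the ODE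
`f' + b2 (g + b2 f²) ∫_{t̃0}^t f = 0` solve the 2d incompressible Euler
equations with free surface, parabolic bottom and external vertical
forcing `s`, in the fluid region where `H > 0`. -/
theorem thacker_solves_euler
    (g H0 b1 b2 t0tilde : ℝ) (hg : 0 < g) (hH0 : 0 < H0)
    (f : ℝ → ℝ) (hf : ContDiff ℝ (⊤ : ℕ∞) f)
    (h : ℝ → ℝ) (hhdef : ∀ t, h t = ∫ t1 in t0tilde..t, f t1)
    (hode : ∀ t, deriv f t + b2 * (g + b2 * (f t) ^ 2) * h t = 0)
    (H η : ℝ → ℝ → ℝ) (u w p s : ℝ → ℝ → ℝ → ℝ) (zb : ℝ → ℝ)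
    (hHdef : ∀ x t, H x t = H0 - b2 / 2 * (x - h t) ^ 2)
    (hudef : ∀ x z t, u x z t = f t)
    (hwdef : ∀ x z t, w x z t = b2 * x * f t)
    (hzbdef : ∀ x, zb x = b1 + b2 / 2 * x ^ 2)
    (hηdef : ∀ x t, η x t = H x t + zb x)
    (hpdef : ∀ x z t, p x z t = (g + b2 * (f t) ^ 2) * (η x t - z))
    (hsdef : ∀ x z t, s x z t = b2 * x * deriv f t) :
    ∀ x t, 0 < H x t → ∀ z, zb x ≤ z → z ≤ η x t →
      (pd3X u x z t + pd3Z w x z t = 0) ∧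
      (pd3T u x z t + u x z t * pd3X u x z t + w x z t * pd3Z u x z t
        + pd3X p x z t = 0) ∧
      (pd3T w x z t + u x z t * pd3X w x z t + w x z t * pd3Z w x z t
        + pd3Z p x z t = -g + s x z t) ∧
      (p x (η x t) t = 0) ∧
      (pdT η x t + u x (η x t) t * pdX η x t - w x (η x t) t = 0) ∧
      (u x (zb x) t * deriv zb x - w x (zb x) t = 0) := by

  have hfd : Differentiable ℝ f := hf.differentiable (by simp)
  have hfc : Continuous f := hf.continuous
  have hfun : h = fun t => ∫ t1 in t0tilde..t, f t1 := funext hhdef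
  have hh' : ∀ t, HasDerivAt h (f t) t := by
    intro t
    rw [hfun]
    exact intervalIntegral.integral_hasDerivAt_right (hfc.intervalIntegrable _ _)
      (hfc.stronglyMeasurableAtFilter _ _) hfc.continuousAt
  intro x t _ z _ _
  -- derivatives
  have hpX : HasDerivAt (fun y => p y z t) ((g + b2 * (f t) ^ 2) * (b2 * h t)) x := by
    have e : (fun y => p y z t)
        = fun y => (g + b2 * (f t) ^ 2) * (H0 - b2 / 2 * (y - h t) ^ 2 + (b1 + b2 / 2 * y ^ 2) - z) := by
      funext y; rw [hpdef, hηdef, hHdef, hzbdef]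
    rw [e]
    have h1 : HasDerivAt (fun y : ℝ => (y - h t) ^ 2) (2 * (x - h t)) x := by
      simpa using ((hasDerivAt_id x).sub_const (h t)).fun_pow 2
    have h2 : HasDerivAt (fun y : ℝ => y ^ 2) (2 * x) x := by
      simpa using hasDerivAt_pow 2 x
    have h3 := ((((h1.const_mul (b2 / 2)).const_sub H0).add
      ((h2.const_mul (b2 / 2)).const_add b1)).sub_const z).const_mul (g + b2 * (f t) ^ 2)
    refine h3.congr_deriv ?_
    ring
  have hηx : HasDerivAt (fun y => η y t) (b2 * h t) x := by
    have e : (fun y => η y t)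
        = fun y => H0 - b2 / 2 * (y - h t) ^ 2 + (b1 + b2 / 2 * y ^ 2) := by
      funext y; rw [hηdef, hHdef, hzbdef]
    rw [e]
    have h1 : HasDerivAt (fun y : ℝ => (y - h t) ^ 2) (2 * (x - h t)) x := by
      simpa using ((hasDerivAt_id x).sub_const (h t)).fun_pow 2
    have h2 : HasDerivAt (fun y : ℝ => y ^ 2) (2 * x) x := by
      simpa using hasDerivAt_pow 2 x
    have h3 := ((h1.const_mul (b2 / 2)).const_sub H0).add ((h2.const_mul (b2 / 2)).const_add b1)
    refine h3.congr_deriv ?_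
    ring
  have hηt : HasDerivAt (fun s => η x s) (b2 * (x - h t) * f t) t := by
    have e : (fun s => η x s)
        = fun s => H0 - b2 / 2 * (x - h s) ^ 2 + (b1 + b2 / 2 * x ^ 2) := by
      funext s; rw [hηdef, hHdef, hzbdef]
    rw [e]
    have h1 : HasDerivAt (fun s : ℝ => (x - h s) ^ 2) (2 * (x - h t) * (-(f t))) t := by
      simpa using ((hh' t).const_sub x).fun_pow 2
    have h3 := ((h1.const_mul (b2 / 2)).const_sub H0).add_const (b1 + b2 / 2 * x ^ 2)
    refine h3.congr_deriv ?_
    ring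
  have hwX : HasDerivAt (fun y => w y z t) (b2 * f t) x := by
    have e : (fun y => w y z t) = fun y => b2 * y * f t := by funext y; rw [hwdef]
    rw [e]
    have := ((hasDerivAt_id x).const_mul b2).mul_const (f t)
    refine this.congr_deriv ?_
    ring
  have hwT : HasDerivAt (fun s => w x z s) (b2 * x * deriv f t) t := by
    have e : (fun s => w x z s) = fun s => b2 * x * f s := by funext s; rw [hwdef]
    rw [e]
    exact ((hfd t).hasDerivAt).const_mul (b2 * x)
  have hpZ : HasDerivAt (fun ζ => p x ζ t) ((g + b2 * (f t) ^ 2) * (-1)) z := by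
    have e : (fun ζ => p x ζ t) = fun ζ => (g + b2 * (f t) ^ 2) * (η x t - ζ) := by
      funext ζ; rw [hpdef]
    rw [e]
    have := ((hasDerivAt_id z).const_sub (η x t)).const_mul (g + b2 * (f t) ^ 2)
    simpa using this
  have hzb : HasDerivAt zb (b2 * x) x := by
    rw [funext hzbdef]
    have := ((hasDerivAt_pow 2 x).const_mul (b2 / 2)).const_add b1
    refine this.congr_deriv ?_
    ring
  have euX : pd3X u x z t = 0 := by simp [pd3X, hudef]
  have euZ : pd3Z u x z t = 0 := by simp [pd3Z, hudef]
  have euT : pd3T u x z t = deriv f t := by simp [pd3T, hudef]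
  have ewZ : pd3Z w x z t = 0 := by simp [pd3Z, hwdef]
  refine ⟨?_, ?_, ?_, ?_, ?_, ?_⟩
  · rw [euX, ewZ]; ring
  · rw [euT, euX, euZ, show pd3X p x z t = _ from hpX.deriv]
    linear_combination hode t
  · rw [show pd3T w x z t = _ from hwT.deriv, show pd3X w x z t = _ from hwX.deriv,
      ewZ, show pd3Z p x z t = _ from hpZ.deriv, hudef, hwdef, hsdef]
    ring
  · rw [hpdef]; ring
  · rw [show pdT η x t = _ from hηt.deriv, show pdX η x t = _ from hηx.deriv, hudef, hwdef]
    ring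
  · rw [hzb.deriv, hudef, hwdef]; ring
end

section
/- Let g > 0, H0 > 0, b1, b2 ∈ ℝ, and let f : ℝ → ℝ be smooth with h(t) := ∫_{t̃0}^{t} f(t1) dt1 satisfying f'(t) + b2 (g + b2 f(t)²) h(t) = 0 for all t. Define H(x,t) := H0 − (b2/2)(x − h(t))², u(x,t) := f(t), w(x,t) := b2 x f(t), zb(x) := b1 + (b2/2) x², η := H + zb, and p(x,t) := (b2/2) f(t)² H(x,t) (the depth-averaged non-hydrostatic pressure). Then at every point (x,t) with H(x,t) > 0 the following hold: (E1) ∂t H + ∂x (H u) = 0; (E2) ∂t (H u) + ∂x (H u² + (g/2) H² + H p) = −(g H + 2 p) ∂x zb; (E3s) ∂t (H w) + ∂x (H u w) = 2 p + H s with source s(x,t) := b2 x f'(t); (E4) ∂t ((η² − zb²)/2) + ∂x (((η² − zb²)/2) u) = H w. -/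
private lemma deriv_congr_hasDerivAt {F G : ℝ → ℝ} (hFG : ∀ y, F y = G y)
    {D x : ℝ} (hG : HasDerivAt G D x) : deriv F x = D := by
  have : F = G := funext hFG
  rw [this]; exact hG.deriv

/-- The depth-averaged Thacker-type fields built from a solution `f` of the ODE
`f' + b2 (g + b2 f²) ∫_{t̃0}^t f = 0` solve the non-hydrostatic depth-averaged
model (E1), (E2), (E4) and (E3) with source `H s`, wherever `H > 0`. -/
theorem thacker_solves_depth_averaged_model
    (g H0 b1 b2 t0tilde : ℝ) (hg : 0 < g) (hH0 : 0 < H0)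
    (f : ℝ → ℝ) (hf : ContDiff ℝ (⊤ : ℕ∞) f)
    (h : ℝ → ℝ) (hhdef : ∀ t, h t = ∫ t1 in t0tilde..t, f t1)
    (hode : ∀ t, deriv f t + b2 * (g + b2 * (f t) ^ 2) * h t = 0)
    (H u w p s : ℝ → ℝ → ℝ) (zb : ℝ → ℝ)
    (hHdef : ∀ x t, H x t = H0 - b2 / 2 * (x - h t) ^ 2)
    (hudef : ∀ x t, u x t = f t)
    (hwdef : ∀ x t, w x t = b2 * x * f t)
    (hzbdef : ∀ x, zb x = b1 + b2 / 2 * x ^ 2)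
    (hpdef : ∀ x t, p x t = b2 / 2 * (f t) ^ 2 * H x t)
    (hsdef : ∀ x t, s x t = b2 * x * deriv f t) :
    ∀ x t, 0 < H x t →
      (pdT H x t + pdX (fun x t => H x t * u x t) x t = 0) ∧
      (pdT (fun x t => H x t * u x t) x t
        + pdX (fun x t => H x t * (u x t) ^ 2 + g / 2 * (H x t) ^ 2
            + H x t * p x t) x t
        = -(g * H x t + 2 * p x t) * deriv zb x) ∧
      (pdT (fun x t => H x t * w x t) x t
        + pdX (fun x t => H x t * u x t * w x t) x t
        = 2 * p x t + H x t * s x t) ∧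
      (pdT (fun x t => ((H x t + zb x) ^ 2 - (zb x) ^ 2) / 2) x t
        + pdX (fun x t => ((H x t + zb x) ^ 2 - (zb x) ^ 2) / 2 * u x t) x t
        = H x t * w x t) := by
  have hfc : Continuous f := hf.continuous
  have hhd : ∀ s, HasDerivAt h (f s) s := by
    intro s
    have hh : h = fun t => ∫ t1 in t0tilde..t, f t1 := funext hhdef
    rw [hh]
    exact intervalIntegral.integral_hasDerivAt_right (hfc.intervalIntegrable _ _)
      hfc.aestronglyMeasurable.stronglyMeasurableAtFilter hfc.continuousAt
  have hfd : ∀ s, HasDerivAt f (deriv f s) s := fun s =>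
    ((hf.differentiable (by simp)) s).hasDerivAt
  intro x t _
  -- basic building blocks
  have hGt : HasDerivAt (fun s => H0 - b2 / 2 * (x - h s) ^ 2)
      (b2 * (x - h t) * f t) t := by
    have A := ((((hhd t).const_sub x).fun_pow 2).const_mul (b2 / 2)).const_sub H0
    refine A.congr_deriv ?_; push_cast; ring
  have hGx : HasDerivAt (fun y => H0 - b2 / 2 * (y - h t) ^ 2)
      (-(b2 * (x - h t))) x := by
    have A := ((((hasDerivAt_id x).sub_const (h t)).fun_pow 2).const_mul (b2 / 2)).const_sub H0
    refine A.congr_deriv ?_; simp only [id_eq]; push_cast; ring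
  have hZx : HasDerivAt (fun y => b1 + b2 / 2 * y ^ 2) (b2 * x) x := by
    have A := (((hasDerivAt_id x).fun_pow 2).const_mul (b2 / 2)).const_add b1
    refine A.congr_deriv ?_; simp only [id_eq]; push_cast; ring
  have hzderiv : deriv zb x = b2 * x :=
    deriv_congr_hasDerivAt (fun y => hzbdef y) hZx
  refine ⟨?_, ?_, ?_, ?_⟩
  · -- E1
    simp only [pdT, pdX]
    rw [deriv_congr_hasDerivAt (fun s => hHdef x s) hGt,
      deriv_congr_hasDerivAt (F := fun y => H y t * u y t)
        (G := fun y => (H0 - b2 / 2 * (y - h t) ^ 2) * f t)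
        (fun y => by simp only [hHdef, hudef]) (hGx.mul_const (f t))]
    ring
  · -- E2
    simp only [pdT, pdX]
    have d1 : deriv (fun s => H x s * u x s) t
        = b2 * (x - h t) * f t * f t + (H0 - b2 / 2 * (x - h t) ^ 2) * deriv f t := by
      rw [deriv_congr_hasDerivAt (F := fun s => H x s * u x s)
        (G := fun s => (H0 - b2 / 2 * (x - h s) ^ 2) * f s)
        (fun s => by simp only [hHdef, hudef]) (hGt.mul (hfd t))]
    have d2 : deriv (fun y => H y t * u y t ^ 2 + g / 2 * H y t ^ 2 + H y t * p y t) x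
        = -(b2 * (x - h t)) * (f t ^ 2
            + (g + b2 * f t ^ 2) * (H0 - b2 / 2 * (x - h t) ^ 2)) := by
      rw [deriv_congr_hasDerivAt
        (F := fun y => H y t * u y t ^ 2 + g / 2 * H y t ^ 2 + H y t * p y t)
        (G := fun y => (H0 - b2 / 2 * (y - h t) ^ 2) * f t ^ 2
          + g / 2 * (H0 - b2 / 2 * (y - h t) ^ 2) ^ 2
          + (H0 - b2 / 2 * (y - h t) ^ 2)
            * (b2 / 2 * f t ^ 2 * (H0 - b2 / 2 * (y - h t) ^ 2)))
        (fun y => by simp only [hHdef, hudef, hpdef])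
        (((hGx.mul_const (f t ^ 2)).add ((hGx.pow 2).const_mul (g / 2))).add
          (hGx.mul (hGx.const_mul (b2 / 2 * f t ^ 2))))]
      push_cast; ring
    rw [d1, d2, hHdef, hpdef, hHdef, hzderiv]
    linear_combination (H0 - b2 / 2 * (x - h t) ^ 2) * hode t
  · -- E3
    simp only [pdT, pdX]
    have d1 : deriv (fun s => H x s * w x s) t
        = b2 * (x - h t) * f t * (b2 * x * f t)
          + (H0 - b2 / 2 * (x - h t) ^ 2) * (b2 * x * deriv f t) := by
      rw [deriv_congr_hasDerivAt (F := fun s => H x s * w x s)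
        (G := fun s => (H0 - b2 / 2 * (x - h s) ^ 2) * (b2 * x * f s))
        (fun s => by simp only [hHdef, hwdef]) (hGt.mul ((hfd t).const_mul (b2 * x)))]
    have d2 : deriv (fun y => H y t * u y t * w y t) x
        = -(b2 * (x - h t)) * f t * (b2 * x * f t)
          + (H0 - b2 / 2 * (x - h t) ^ 2) * f t * (b2 * f t) := by
      rw [deriv_congr_hasDerivAt (F := fun y => H y t * u y t * w y t)
        (G := fun y => (H0 - b2 / 2 * (y - h t) ^ 2) * f t * (b2 * y * f t))
        (fun y => by simp only [hHdef, hudef, hwdef])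
        ((hGx.mul_const (f t)).mul
          (((hasDerivAt_id' x).const_mul b2).mul_const (f t)))]
      ring
    rw [d1, d2, hpdef, hHdef, hsdef]
    ring
  · -- E4
    simp only [pdT, pdX]
    have d1 : deriv (fun s => ((H x s + zb x) ^ 2 - zb x ^ 2) / 2) t
        = ((H0 - b2 / 2 * (x - h t) ^ 2) + zb x) * (b2 * (x - h t) * f t) := by
      rw [deriv_congr_hasDerivAt
        (F := fun s => ((H x s + zb x) ^ 2 - zb x ^ 2) / 2)
        (G := fun s => (((H0 - b2 / 2 * (x - h s) ^ 2) + zb x) ^ 2 - zb x ^ 2) / 2)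
        (fun s => by simp only [hHdef])
        ((((hGt.add_const (zb x)).pow 2).sub_const (zb x ^ 2)).div_const 2)]
      push_cast; ring
    have d2 : deriv (fun y => ((H y t + zb y) ^ 2 - zb y ^ 2) / 2 * u y t) x
        = ((((H0 - b2 / 2 * (x - h t) ^ 2) + (b1 + b2 / 2 * x ^ 2))
              * (-(b2 * (x - h t)) + b2 * x))
            - (b1 + b2 / 2 * x ^ 2) * (b2 * x)) * f t := by
      rw [deriv_congr_hasDerivAt
        (F := fun y => ((H y t + zb y) ^ 2 - zb y ^ 2) / 2 * u y t)
        (G := fun y => (((H0 - b2 / 2 * (y - h t) ^ 2) + (b1 + b2 / 2 * y ^ 2)) ^ 2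
            - (b1 + b2 / 2 * y ^ 2) ^ 2) / 2 * f t)
        (fun y => by simp only [hHdef, hzbdef, hudef])
        (((((hGx.fun_add hZx).fun_pow 2).sub (hZx.fun_pow 2)).div_const 2).mul_const (f t))]
      push_cast; ring
    rw [d1, d2, hHdef, hzbdef, hwdef]
    ring
end

section
/- Let g > 0, let H0 > 0, l > H0 and d ≠ 0 be real parameters, and set c0 := (l/d) √( g H0³ / (l² − H0²) ) and a := c0² d² / (g l²). Define sech(X) := 1/cosh(X) and, writing ξ := (x − c0 t)/l: H(x,t) := H0 + a sech(ξ)², u(x,t) := c0 (1 − d/H(x,t)), w(x,t) := −(a c0 d /(l H(x,t))) sech(ξ) sech'(ξ), and p(x,t) := (a c0² d² /(2 l² H(x,t)²)) ( (2 H0 − H(x,t)) (sech'(ξ))² + H(x,t) sech(ξ) sech''(ξ) ). Then (H, u, w, p), together with a constant bottom zb, is a solitary-wave solution of the non-hydrostatic depth-averaged model, i.e. it satisfies (E1) ∂t H + ∂x (H u) = 0; (E2) ∂t (H u) + ∂x (H u² + (g/2) H² + H p) = 0; (E3) ∂t (H w) + ∂x (H u w) = 2 p; (E4) ∂t ((η²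 − zb²)/2) + ∂x (((η² − zb²)/2) u) = H w, where η := H + zb, at every point (x,t). -/
/-- The hyperbolic secant. -/
noncomputable def sech (X : ℝ) : ℝ := 1 / Real.cosh X

/-!
Every field is a travelling wave in `ξ = (x - c₀ t) / l`, so each balance law
`∂ₜ f + ∂ₓ q = r` reduces to `(q - c₀ f)'(ξ) / l = r`. In the moving frame the mass flux is
constant, `H (u - c₀) = -c₀ d`; hence `q - c₀ f` is constant for (E1), is `-c₀ d w` for (E3) and
`-c₀ d (H / 2 + zb₀)` for (E4). For (E2), `sech'² = sech² - sech⁴` and `sech'' = sech - 2 sech³`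
turn `q - c₀ f` into a rational function of `sech²`, which is constant because of the
relations `c₀² d² = a g l²` and `a (l² - H₀²) = H₀³` defining `c₀` and `a`.
-/

open Real

theorem hasDerivAt_sech (X : ℝ) : HasDerivAt sech (-sinh X / cosh X ^ 2) X := by
  have h : sech = fun X => (cosh X)⁻¹ := funext fun X => one_div (cosh X)
  exact h ▸ (hasDerivAt_cosh X).inv (cosh_pos X).ne'

theorem deriv_sech : deriv sech = fun X => -sinh X / cosh X ^ 2 :=
  funext fun X => (hasDerivAt_sech X).deriv

theorem deriv_sech_sq (X : ℝ) : deriv sech X ^ 2 = sech X ^ 2 - sech X ^ 4 := by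
  have hc := (cosh_pos X).ne'
  simp only [deriv_sech, sech]
  field_simp
  exact sinh_sq X

theorem hasDerivAt_deriv_sech (X : ℝ) :
    HasDerivAt (deriv sech) (sech X - 2 * sech X ^ 3) X := by
  have hc := (cosh_pos X).ne'
  rw [deriv_sech]
  refine ((hasDerivAt_sinh X).fun_neg.fun_div ((hasDerivAt_cosh X).fun_pow 2)
    (pow_ne_zero 2 hc)).congr_deriv ?_
  simp only [sech]
  field_simp
  rw [sinh_sq]
  push_cast
  ring

theorem deriv_deriv_sech (X : ℝ) : deriv (deriv sech) X = sech X - 2 * sech X ^ 3 :=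
  (hasDerivAt_deriv_sech X).deriv

section TravellingWave

variable {c l x t : ℝ} {F R : ℝ → ℝ} {F' R' : ℝ}

theorem pdX_travelling (hF : HasDerivAt F F' ((x - c * t) / l)) :
    pdX (fun x t => F ((x - c * t) / l)) x t = F' / l := by
  have hξ : HasDerivAt (fun y => (y - c * t) / l) (1 / l) x :=
    ((hasDerivAt_id x).sub_const (c * t)).div_const l
  exact (hF.comp x hξ).deriv.trans (by ring)

theorem pdT_travelling (hF : HasDerivAt F F' ((x - c * t) / l)) :
    pdT (fun x t => F ((x - c * t) / l)) x t = -c * F' / l := by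
  have hξ : HasDerivAt (fun s => (x - c * s) / l) (-c / l) t := by
    simpa using (((hasDerivAt_id t).const_mul c).const_sub x).div_const l
  exact (hF.comp t hξ).deriv.trans (by ring)

theorem pdT_add_pdX_travelling {f q : ℝ → ℝ → ℝ}
    (hf : ∀ x t, f x t = F ((x - c * t) / l))
    (hq : ∀ x t, q x t = c * F ((x - c * t) / l) + R ((x - c * t) / l))
    (hF : HasDerivAt F F' ((x - c * t) / l)) (hR : HasDerivAt R R' ((x - c * t) / l)) :
    pdT f x t + pdX q x t = R' / l := by
  rw [show f = fun x t => F ((x - c * t) / l) from funext₂ hf,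
    show q = fun x t => (fun X => c * F X + R X) ((x - c * t) / l) from funext₂ hq,
    pdT_travelling hF, pdX_travelling ((hF.const_mul c).fun_add hR)]
  ring

end TravellingWave

theorem mul_mul_one_sub_div {D : ℝ} (hD : D ≠ 0) (c d : ℝ) :
    D * (c * (1 - d / D)) = c * D - c * d := by
  field_simp

noncomputable def solitaryDepth (H0 a X : ℝ) : ℝ := H0 + a * sech X ^ 2

section SolitaryWave

variable {g H0 l d c0 a zb0 : ℝ}

theorem solitaryDepth_pos (hH0 : 0 < H0) (ha : 0 ≤ a) (X : ℝ) : 0 < solitaryDepth H0 a X := by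
  unfold solitaryDepth; positivity

theorem hasDerivAt_solitaryDepth (X : ℝ) :
    HasDerivAt (solitaryDepth H0 a) (2 * a * sech X * deriv sech X) X := by
  have hS : HasDerivAt sech (deriv sech X) X := (hasDerivAt_sech X).differentiableAt.hasDerivAt
  exact ((hS.fun_pow 2).const_mul a).const_add H0 |>.congr_deriv (by push_cast; ring)

theorem solitary_wave_parameters (hg : 0 < g) (hH0 : 0 < H0) (hl : H0 < l) (hd : d ≠ 0)
    (hc0 : c0 = l / d * √(g * H0 ^ 3 / (l ^ 2 - H0 ^ 2)))
    (ha : a = c0 ^ 2 * d ^ 2 / (g * l ^ 2)) :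
    c0 ^ 2 * d ^ 2 = a * (g * l ^ 2) ∧ a * (l ^ 2 - H0 ^ 2) = H0 ^ 3 := by
  have hl0 : 0 < l := hH0.trans hl
  have hD : 0 < l ^ 2 - H0 ^ 2 := by nlinarith
  have hcd : c0 ^ 2 * d ^ 2 = a * (g * l ^ 2) := by
    rw [ha]; field_simp
  refine ⟨hcd, ?_⟩
  have hc2 : c0 ^ 2 * d ^ 2 = g * l ^ 2 * H0 ^ 3 / (l ^ 2 - H0 ^ 2) := by
    rw [hc0, mul_pow, div_pow, sq_sqrt (by positivity)]
    field_simp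
  rw [hcd] at hc2
  field_simp at hc2
  linear_combination hc2

theorem solitary_momentum_flux (hl : l ≠ 0) (hH0 : 0 < H0) (ha : 0 ≤ a)
    (hcd : c0 ^ 2 * d ^ 2 = a * (g * l ^ 2)) (hal : a * (l ^ 2 - H0 ^ 2) = H0 ^ 3) (X : ℝ) :
    solitaryDepth H0 a X * (c0 * (1 - d / solitaryDepth H0 a X)) ^ 2
      + g / 2 * solitaryDepth H0 a X ^ 2
      + solitaryDepth H0 a X * (a * c0 ^ 2 * d ^ 2 / (2 * l ^ 2 * solitaryDepth H0 a X ^ 2)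
        * ((2 * H0 - solitaryDepth H0 a X) * deriv sech X ^ 2
          + solitaryDepth H0 a X * sech X * deriv (deriv sech) X))
    = c0 * (c0 * solitaryDepth H0 a X - c0 * d) + (g * H0 * (3 * H0 + 2 * a) / 2 - c0 ^ 2 * d) := by
  have hD := (solitaryDepth_pos hH0 ha X).ne'
  rw [deriv_sech_sq, deriv_deriv_sech]
  unfold solitaryDepth at hD ⊢
  field_simp
  linear_combination (2 * l ^ 2 + a * sech X ^ 2 * (2 * H0 - 3 * H0 * sech X ^ 2 - a * sech X ^ 4))
    * hcd + 2 * g * l ^ 2 * hal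

variable {H u w p : ℝ → ℝ → ℝ}

theorem mass_balance (hH0 : 0 < H0) (ha : 0 ≤ a)
    (hH : ∀ x t, H x t = solitaryDepth H0 a ((x - c0 * t) / l))
    (hu : ∀ x t, u x t = c0 * (1 - d / H x t)) (x t : ℝ) :
    pdT H x t + pdX (fun x t => H x t * u x t) x t = 0 := by
  have hflux : ∀ x t, H x t * u x t
      = c0 * solitaryDepth H0 a ((x - c0 * t) / l) + -(c0 * d) := fun x t => by
    rw [hu, hH, mul_mul_one_sub_div (solitaryDepth_pos hH0 ha _).ne', sub_eq_add_neg]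
  simpa using pdT_add_pdX_travelling hH hflux (hasDerivAt_solitaryDepth _) (hasDerivAt_const _ _)

theorem momentum_balance (hl : l ≠ 0) (hH0 : 0 < H0) (ha : 0 ≤ a)
    (hcd : c0 ^ 2 * d ^ 2 = a * (g * l ^ 2)) (hal : a * (l ^ 2 - H0 ^ 2) = H0 ^ 3)
    (hH : ∀ x t, H x t = solitaryDepth H0 a ((x - c0 * t) / l))
    (hu : ∀ x t, u x t = c0 * (1 - d / H x t))
    (hp : ∀ x t, p x t = a * c0 ^ 2 * d ^ 2 / (2 * l ^ 2 * (H x t) ^ 2)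
        * ((2 * H0 - H x t) * (deriv sech ((x - c0 * t) / l)) ^ 2
          + H x t * sech ((x - c0 * t) / l) * deriv (deriv sech) ((x - c0 * t) / l)))
    (x t : ℝ) :
    pdT (fun x t => H x t * u x t) x t
      + pdX (fun x t => H x t * (u x t) ^ 2 + g / 2 * (H x t) ^ 2 + H x t * p x t) x t = 0 := by
  have hmass : ∀ x t, H x t * u x t = c0 * solitaryDepth H0 a ((x - c0 * t) / l) - c0 * d :=
    fun x t => by rw [hu, hH, mul_mul_one_sub_div (solitaryDepth_pos hH0 ha _).ne']
  have hflux : ∀ x t, H x t * (u x t) ^ 2 + g / 2 * (H x t) ^ 2 + H x t * p x t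
      = c0 * (c0 * solitaryDepth H0 a ((x - c0 * t) / l) - c0 * d)
        + (g * H0 * (3 * H0 + 2 * a) / 2 - c0 ^ 2 * d) := fun x t => by
    rw [hp, hu, hH]
    exact solitary_momentum_flux hl hH0 ha hcd hal _
  simpa using pdT_add_pdX_travelling hmass hflux
    (((hasDerivAt_solitaryDepth _).const_mul c0).sub_const _) (hasDerivAt_const _ _)

theorem hasDerivAt_sech_mul_deriv_sech (X : ℝ) :
    HasDerivAt (fun X => sech X * deriv sech X)
      (deriv sech X ^ 2 + sech X * deriv (deriv sech) X) X := by
  have hS : HasDerivAt sech (deriv sech X) X := (hasDerivAt_sech X).differentiableAt.hasDerivAt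
  have hS' : HasDerivAt (deriv sech) (deriv (deriv sech) X) X :=
    (hasDerivAt_deriv_sech X).differentiableAt.hasDerivAt
  exact (hS.fun_mul hS').congr_deriv (by ring)

theorem vertical_momentum_balance (hl : l ≠ 0) (hH0 : 0 < H0) (ha : 0 ≤ a)
    (hH : ∀ x t, H x t = solitaryDepth H0 a ((x - c0 * t) / l))
    (hu : ∀ x t, u x t = c0 * (1 - d / H x t))
    (hw : ∀ x t, w x t = -(a * c0 * d / (l * H x t))
        * sech ((x - c0 * t) / l) * deriv sech ((x - c0 * t) / l))
    (hp : ∀ x t, p x t = a * c0 ^ 2 * d ^ 2 / (2 * l ^ 2 * (H x t) ^ 2)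
        * ((2 * H0 - H x t) * (deriv sech ((x - c0 * t) / l)) ^ 2
          + H x t * sech ((x - c0 * t) / l) * deriv (deriv sech) ((x - c0 * t) / l)))
    (x t : ℝ) :
    pdT (fun x t => H x t * w x t) x t + pdX (fun x t => H x t * u x t * w x t) x t
      = 2 * p x t := by
  have hHw : ∀ x t, H x t * w x t = -(a * c0 * d / l)
      * (sech ((x - c0 * t) / l) * deriv sech ((x - c0 * t) / l)) := fun x t => by
    have hD := (solitaryDepth_pos hH0 ha ((x - c0 * t) / l)).ne'
    rw [hw, hH]
    field_simp
  have hflux : ∀ x t, H x t * u x t * w x t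
      = c0 * (-(a * c0 * d / l) * (sech ((x - c0 * t) / l) * deriv sech ((x - c0 * t) / l)))
        + a * c0 ^ 2 * d ^ 2 / l * (sech ((x - c0 * t) / l) * deriv sech ((x - c0 * t) / l)
          / solitaryDepth H0 a ((x - c0 * t) / l)) := fun x t => by
    have hD := (solitaryDepth_pos hH0 ha ((x - c0 * t) / l)).ne'
    rw [hw, hu, hH]
    field_simp
    ring
  have hD := solitaryDepth_pos hH0 ha ((x - c0 * t) / l)
  rw [pdT_add_pdX_travelling hHw hflux ((hasDerivAt_sech_mul_deriv_sech _).const_mul _)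
    (((hasDerivAt_sech_mul_deriv_sech _).fun_div (hasDerivAt_solitaryDepth _) hD.ne').const_mul _),
    hp, hH]
  unfold solitaryDepth at hD ⊢
  field_simp
  ring

theorem free_surface_balance {zb : ℝ → ℝ} (hH0 : 0 < H0) (ha : 0 ≤ a)
    (hzb : ∀ x, zb x = zb0)
    (hH : ∀ x t, H x t = solitaryDepth H0 a ((x - c0 * t) / l))
    (hu : ∀ x t, u x t = c0 * (1 - d / H x t))
    (hw : ∀ x t, w x t = -(a * c0 * d / (l * H x t))
        * sech ((x - c0 * t) / l) * deriv sech ((x - c0 * t) / l))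
    (x t : ℝ) :
    pdT (fun x t => ((H x t + zb x) ^ 2 - (zb x) ^ 2) / 2) x t
      + pdX (fun x t => ((H x t + zb x) ^ 2 - (zb x) ^ 2) / 2 * u x t) x t = H x t * w x t := by
  have hvol : ∀ x t, ((H x t + zb x) ^ 2 - (zb x) ^ 2) / 2
      = ((solitaryDepth H0 a ((x - c0 * t) / l) + zb0) ^ 2 - zb0 ^ 2) / 2 := fun x t => by
    rw [hH, hzb]
  have hflux : ∀ x t, ((H x t + zb x) ^ 2 - (zb x) ^ 2) / 2 * u x t
      = c0 * (((solitaryDepth H0 a ((x - c0 * t) / l) + zb0) ^ 2 - zb0 ^ 2) / 2)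
        + -(c0 * d) * (solitaryDepth H0 a ((x - c0 * t) / l) / 2 + zb0) := fun x t => by
    have hD := (solitaryDepth_pos hH0 ha ((x - c0 * t) / l)).ne'
    rw [hu, hH, hzb]
    field_simp
    ring
  have hD := solitaryDepth_pos hH0 ha ((x - c0 * t) / l)
  rw [pdT_add_pdX_travelling hvol hflux
    ((((hasDerivAt_solitaryDepth _).add_const zb0).fun_pow 2).sub_const _ |>.div_const 2)
    ((((hasDerivAt_solitaryDepth _).div_const 2).add_const zb0).const_mul _), hw, hH]
  unfold solitaryDepth at hD ⊢
  field_simp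

end SolitaryWave

/-- The solitary-wave profile, with a constant bottom `zb0`, is a solution of
the non-hydrostatic depth-averaged model (E1)–(E4). -/
theorem solitary_wave_solution
    (g H0 l d zb0 : ℝ) (hg : 0 < g) (hH0 : 0 < H0) (hl : H0 < l) (hd : d ≠ 0)
    (c0 a : ℝ)
    (hc0 : c0 = l / d * Real.sqrt (g * H0 ^ 3 / (l ^ 2 - H0 ^ 2)))
    (ha : a = c0 ^ 2 * d ^ 2 / (g * l ^ 2))
    (H u w p : ℝ → ℝ → ℝ) (zb : ℝ → ℝ)
    (hzbdef : ∀ x, zb x = zb0)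
    (hHdef : ∀ x t, H x t = H0 + a * (sech ((x - c0 * t) / l)) ^ 2)
    (hudef : ∀ x t, u x t = c0 * (1 - d / H x t))
    (hwdef : ∀ x t, w x t = -(a * c0 * d / (l * H x t))
        * sech ((x - c0 * t) / l) * deriv sech ((x - c0 * t) / l))
    (hpdef : ∀ x t, p x t = a * c0 ^ 2 * d ^ 2 / (2 * l ^ 2 * (H x t) ^ 2)
        * ((2 * H0 - H x t) * (deriv sech ((x - c0 * t) / l)) ^ 2
          + H x t * sech ((x - c0 * t) / l)
            * deriv (deriv sech) ((x - c0 * t) / l))) :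
    ∀ x t,
      (pdT H x t + pdX (fun x t => H x t * u x t) x t = 0) ∧
      (pdT (fun x t => H x t * u x t) x t
        + pdX (fun x t => H x t * (u x t) ^ 2 + g / 2 * (H x t) ^ 2
            + H x t * p x t) x t = 0) ∧
      (pdT (fun x t => H x t * w x t) x t
        + pdX (fun x t => H x t * u x t * w x t) x t = 2 * p x t) ∧
      (pdT (fun x t => ((H x t + zb x) ^ 2 - (zb x) ^ 2) / 2) x t
        + pdX (fun x t => ((H x t + zb x) ^ 2 - (zb x) ^ 2) / 2 * u x t) x t
        = H x t * w x t) := by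
  obtain ⟨hcd, hal⟩ := solitary_wave_parameters hg hH0 hl hd hc0 ha
  have hl0 : l ≠ 0 := (hH0.trans hl).ne'
  have ha0 : 0 ≤ a := ha ▸ by positivity
  intro x t
  exact ⟨mass_balance hH0 ha0 hHdef hudef x t,
    momentum_balance hl0 hH0 ha0 hcd hal hHdef hudef hpdef x t,
    vertical_momentum_balance hl0 hH0 ha0 hHdef hudef hwdef hpdef x t,
    free_surface_balance hH0 ha0 hzbdef hHdef hudef hwdef x t⟩
end

section
/- Let Q0 ≠ 0 be a real constant and let H, u, w, p : ℝ → ℝ (functions of x only, i.e. stationary) be smooth with H > 0 everywhere, and let zb : ℝ → ℝ be smooth. Suppose H u = Q0 everywhere and the stationary non-hydrostatic depth-averaged model holds: d/dx ( Q0²/H + (g/2) H² + H p ) = −( g H + 2 p ) zb'; H w = (Q0/2) d/dx ( H + 2 zb ); and p = (Q0/2) w'. Then (H, w, p) satisfies the first-order ODE system: H' = (2/Q0) H w − 2 zb'; w' = (2/Q0) p; p' = ( Q0²/H² − g H − p ) ( (2/Q0) w − (2/H) zb' ) − ( g + 2p/H ) zb'. -/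
/-- Stationary solutions of the non-hydrostatic depth-averaged model with
constant discharge `H u = Q0` satisfy the first-order ODE system for
`(H, w, p)`. -/
theorem stationary_first_order_system
    (g Q0 : ℝ) (hg : 0 < g) (hQ0 : Q0 ≠ 0)
    (H u w p zb : ℝ → ℝ)
    (hH : ContDiff ℝ (⊤ : ℕ∞) H) (hu : ContDiff ℝ (⊤ : ℕ∞) u) (hw : ContDiff ℝ (⊤ : ℕ∞) w)
    (hp : ContDiff ℝ (⊤ : ℕ∞) p) (hzb : ContDiff ℝ (⊤ : ℕ∞) zb)
    (hHpos : ∀ x, 0 < H x)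
    (hQ : ∀ x, H x * u x = Q0)
    (hmom : ∀ x,
      deriv (fun x => Q0 ^ 2 / H x + g / 2 * (H x) ^ 2 + H x * p x) x
        = -(g * H x + 2 * p x) * deriv zb x)
    (hconstraint : ∀ x,
      H x * w x = Q0 / 2 * deriv (fun x => H x + 2 * zb x) x)
    (hvert : ∀ x, p x = Q0 / 2 * deriv w x) :
    (∀ x, deriv H x = 2 / Q0 * (H x * w x) - 2 * deriv zb x) ∧
    (∀ x, deriv w x = 2 / Q0 * p x) ∧
    (∀ x, deriv p x
      = (Q0 ^ 2 / (H x) ^ 2 - g * H x - p x)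
          * (2 / Q0 * w x - 2 / H x * deriv zb x)
        - (g + 2 * p x / H x) * deriv zb x) := by
  have hHd : Differentiable ℝ H := hH.differentiable (by simp)
  have hpd : Differentiable ℝ p := hp.differentiable (by simp)
  have hzd : Differentiable ℝ zb := hzb.differentiable (by simp)
  have hHne : ∀ x, H x ≠ 0 := fun x => (hHpos x).ne'
  have h1 : ∀ x, deriv H x = 2 / Q0 * (H x * w x) - 2 * deriv zb x := by
    intro x
    have hc := hconstraint x
    have hd : deriv (fun x => H x + 2 * zb x) x = deriv H x + 2 * deriv zb x := by
      rw [deriv_fun_add (hHd x) ((hzd x).const_mul 2), deriv_const_mul 2 (hzd x)]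
    rw [hd] at hc
    field_simp at hc ⊢
    linarith
  have h2 : ∀ x, deriv w x = 2 / Q0 * p x := by
    intro x
    have := hvert x
    field_simp at this ⊢
    linarith
  refine ⟨h1, h2, ?_⟩
  intro x
  have hH' := (hHd x).hasDerivAt
  have hp' := (hpd x).hasDerivAt
  have hDa : HasDerivAt (fun x => Q0 ^ 2 / H x + g / 2 * (H x) ^ 2 + H x * p x)
      ((0 * H x - Q0 ^ 2 * deriv H x) / (H x) ^ 2
        + g / 2 * (2 * H x ^ 1 * deriv H x)
        + (deriv H x * p x + H x * deriv p x)) x := by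
    exact (((hasDerivAt_const x (Q0 ^ 2)).div hH' (hHne x)).add
      ((hH'.pow 2).const_mul (g / 2))).add (hH'.mul hp')
  have key := hmom x
  rw [hDa.deriv] at key
  have hH1 := h1 x
  have hne := hHne x
  have hp3 : deriv p x
      = ((Q0 ^ 2 / H x ^ 2 - g * H x - p x) * deriv H x
          - (g * H x + 2 * p x) * deriv zb x) / H x := by
    field_simp at key ⊢
    linear_combination key
  rw [hp3, hH1]
  field_simp
end

section
/- Let Q0 ≠ 0 be a real constant, f : ℝ → ℝ a smooth function, and suppose H, zb : ℝ → ℝ are smooth with H > 0 everywhere and satisfy the two ODEs: ( (g/2) H − Q0²/H² ) H' = −(H/Q0) ( g H + Q0 f' ) f − (Q0/2) H f'' and zb' = −(1/2) H' + H f / Q0. Define p := (Q0/2) f', u := Q0/H, and w := f. Then (H, u, w, p), regarded as time-independent functions on ℝ × ℝ, is a stationary solution of the non-hydrostatic depth-averaged model over the bottom zb: it satisfies (E1) ∂t H + ∂x (H u) = 0; (E2) ∂t (H u) + ∂x (H u² + (g/2) H² + H p) = −(g H + 2 p) ∂x zb; (E3) ∂t (H w) + ∂x (H u w) = 2 p;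 (E4) ∂t ((η² − zb²)/2) + ∂x (((η² − zb²)/2) u) = H w, where η := H + zb. -/
/-- If `H` and `zb` solve the two stationary ODEs built from a prescribed
vertical velocity `f`, then `(H, u, w, p)` with `p := (Q0/2) f'`,
`u := Q0/H`, `w := f`, regarded as time-independent functions, is a
stationary solution of the non-hydrostatic depth-averaged model (E1)–(E4). -/
theorem stationary_quasi_analytical_solution
    (g Q0 : ℝ) (hg : 0 < g) (hQ0 : Q0 ≠ 0)
    (f H zb : ℝ → ℝ)
    (hf : ContDiff ℝ (⊤ : ℕ∞) f) (hH : ContDiff ℝ (⊤ : ℕ∞) H) (hzb : ContDiff ℝ (⊤ : ℕ∞) zb)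
    (hHpos : ∀ x, 0 < H x)
    (hODE1 : ∀ x,
      (g / 2 * H x - Q0 ^ 2 / (H x) ^ 2) * deriv H x
        = -(H x / Q0) * (g * H x + Q0 * deriv f x) * f x
          - Q0 / 2 * H x * deriv (deriv f) x)
    (hODE2 : ∀ x, deriv zb x = -(1 / 2) * deriv H x + H x * f x / Q0)
    (p u w : ℝ → ℝ)
    (hpdef : ∀ x, p x = Q0 / 2 * deriv f x)
    (hudef : ∀ x, u x = Q0 / H x)
    (hwdef : ∀ x, w x = f x) :
    ∀ x t,
      (pdT (fun x _ => H x) x t + pdX (fun x _ => H x * u x) x t = 0) ∧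
      (pdT (fun x _ => H x * u x) x t
        + pdX (fun x _ => H x * (u x) ^ 2 + g / 2 * (H x) ^ 2
            + H x * p x) x t
        = -(g * H x + 2 * p x) * deriv zb x) ∧
      (pdT (fun x _ => H x * w x) x t
        + pdX (fun x _ => H x * u x * w x) x t = 2 * p x) ∧
      (pdT (fun x _ => ((H x + zb x) ^ 2 - (zb x) ^ 2) / 2) x t
        + pdX (fun x _ => ((H x + zb x) ^ 2 - (zb x) ^ 2) / 2 * u x) x t
        = H x * w x) := by
  intro x t
  have hne : ∀ y, H y ≠ 0 := fun y => (hHpos y).ne'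
  have hHd : ∀ y, HasDerivAt H (deriv H y) y :=
    fun y => (hH.differentiable (by simp) y).hasDerivAt
  have hfd : ∀ y, HasDerivAt f (deriv f y) y :=
    fun y => (hf.differentiable (by simp) y).hasDerivAt
  have hfd' : ∀ y, HasDerivAt (deriv f) (deriv (deriv f) y) y := by
    have h2 : ContDiff ℝ ((⊤ : ℕ∞) : WithTop ℕ∞) f := hf.of_le (by simp)
    have := (contDiff_infty_iff_deriv.mp h2).2.differentiable (by simp)
    exact fun y => (this y).hasDerivAt
  have hzbd : ∀ y, HasDerivAt zb (deriv zb y) y :=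
    fun y => (hzb.differentiable (by simp) y).hasDerivAt
  refine ⟨?_, ?_, ?_, ?_⟩
  · have e1 : (fun y => H y * u y) = fun _ => Q0 := by
      funext y; rw [hudef]; field_simp [hne y]
    simp [pdT, pdX, e1]
  · have e2 : (fun y => H y * (u y) ^ 2 + g / 2 * (H y) ^ 2 + H y * p y)
        = fun y => Q0 ^ 2 / H y + g / 2 * (H y) ^ 2 + H y * (Q0 / 2 * deriv f y) := by
      funext y; rw [hudef, hpdef]; field_simp [hne y]
    have hd : HasDerivAt
        (fun y => Q0 ^ 2 / H y + g / 2 * (H y) ^ 2 + H y * (Q0 / 2 * deriv f y))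
        ((0 * H x - Q0 ^ 2 * deriv H x) / H x ^ 2
          + g / 2 * (2 * H x ^ 1 * deriv H x)
          + (deriv H x * (Q0 / 2 * deriv f x)
            + H x * (Q0 / 2 * deriv (deriv f) x))) x := by
      exact (((hasDerivAt_const x (Q0 ^ 2)).div (hHd x) (hne x)).add
        ((((hHd x).pow 2).const_mul (g / 2)))).add
        ((hHd x).mul (((hfd' x)).const_mul (Q0 / 2)))
    simp only [pdT, pdX, e2, deriv_const, zero_add]
    rw [hd.deriv, hODE2 x, hpdef]
    have h1 := hODE1 x
    have hx := hne x
    field_simp at h1 ⊢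
    ring_nf
    ring_nf at h1
    linarith [h1]
  · have e3 : (fun y => H y * u y * w y) = fun y => Q0 * f y := by
      funext y; rw [hudef, hwdef]; field_simp [hne y]
    simp only [pdT, pdX, e3, deriv_const, zero_add]
    rw [((hfd x).const_mul Q0).deriv, hpdef]; ring
  · have e4 : (fun y => ((H y + zb y) ^ 2 - (zb y) ^ 2) / 2 * u y)
        = fun y => Q0 * (H y / 2 + zb y) := by
      funext y; rw [hudef, ← mul_div_assoc, div_eq_iff (hne y)]; ring
    have hd : HasDerivAt (fun y => Q0 * (H y / 2 + zb y))
        (Q0 * (deriv H x / 2 + deriv zb x)) x :=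
      (((hHd x).div_const 2).add (hzbd x)).const_mul Q0
    simp only [pdT, pdX, e4, deriv_const, zero_add]
    rw [hd.deriv, hODE2 x, hwdef]
    field_simp
    ring
end
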